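/- arXiv:2401.02084 — 10 statements merged into one kernel-verified Lean document; each statement's English description precedes it below -/
import Mathlib

section
/- Let x ∈ bd K_{n+1} with x ≠ 0 and let y ∈ K_{n+1} satisfy ⟨x, y⟩ = 0. Then there exists α ≥ 0 such that y = α x̂. -/
open scoped RealInnerProductSpace

/-- Euclidean norm of the tail `x₁` of `x = (x₀; x₁) ∈ ℝ × ℝⁿ`. -/
noncomputable def tailNorm {n : ℕ} (x : EuclideanSpace ℝ (Fin (n + 1))) : ℝ :=
  Real.sqrt (∑ i : Fin n, x i.succ ^ 2)

/-- The second-order cone `K_{n+1} = {(x₀; x₁) : ‖x₁‖ ≤ x₀}`. -/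
def soc (n : ℕ) : Set (EuclideanSpace ℝ (Fin (n + 1))) :=
  {x | tailNorm x ≤ x 0}

/-- The boundary of the second-order cone: `{(x₀; x₁) : ‖x₁‖ = x₀}`. -/
def socBd (n : ℕ) : Set (EuclideanSpace ℝ (Fin (n + 1))) :=
  {x | tailNorm x = x 0}

/-- `x̂ = (x₀; −x₁)` for `x = (x₀; x₁)`. -/
def socHat {n : ℕ} (x : EuclideanSpace ℝ (Fin (n + 1))) : EuclideanSpace ℝ (Fin (n + 1)) :=
  WithLp.toLp 2 (fun i => if i = 0 then x 0 else -(x i))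

/-! Write `x = (x₀; u)` and `y = (y₀; v)`. Since `‖u‖ = x₀` and `‖v‖ ≤ y₀`,
`0 = ⟪x, y⟫ = x₀ y₀ + ⟪u, v⟫ ≥ x₀ y₀ - ‖u‖ ‖v‖ ≥ 0`, so Cauchy–Schwarz is tight and
`v = -(y₀ / x₀) u`; here `u ≠ 0` because `x ≠ 0`. Hence `y = (y₀ / x₀) x̂`. -/

section InnerProductSpace

variable {F : Type*} [NormedAddCommGroup F] [InnerProductSpace ℝ F]

/-- The equality case of Cauchy–Schwarz, reached because `-⟪u, v⟫ ≤ ‖u‖ ‖v‖ ≤ ‖u‖ b`. -/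
theorem eq_neg_div_smul_of_inner_eq_neg_norm_mul {u v : F} {b : ℝ} (hu : u ≠ 0) (hv : ‖v‖ ≤ b)
    (huv : ⟪u, v⟫ = -(‖u‖ * b)) : v = -(b / ‖u‖) • u := by
  have hu_pos : 0 < ‖u‖ := norm_pos_iff.mpr hu
  have hb_le : b ≤ ‖v‖ := by
    have := neg_le_of_abs_le (abs_real_inner_le_norm u v)
    exact le_of_mul_le_mul_left (by linarith) hu_pos
  have hv_eq : ‖v‖ = b := le_antisymm hv hb_le
  have hcs : ⟪u, -v⟫ = ‖u‖ * ‖-v‖ := by rw [inner_neg_right, norm_neg, huv, hv_eq, neg_neg]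
  have hsmul : b • u = ‖u‖ • -v := by simpa [hv_eq] using inner_eq_norm_mul_iff_real.mp hcs
  apply smul_right_injective F hu_pos.ne'
  simp only [smul_smul, mul_div_cancel₀ _ hu_pos.ne', neg_smul, hsmul, smul_neg, neg_neg]

end InnerProductSpace

section SecondOrderCone

variable {n : ℕ}

def socTail (x : EuclideanSpace ℝ (Fin (n + 1))) : EuclideanSpace ℝ (Fin n) :=
  WithLp.toLp 2 fun i => x i.succ

@[simp]
theorem socTail_apply (x : EuclideanSpace ℝ (Fin (n + 1))) (i : Fin n) :
    socTail x i = x i.succ := rfl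

@[simp]
theorem socTail_zero : socTail (0 : EuclideanSpace ℝ (Fin (n + 1))) = 0 := rfl

theorem tailNorm_eq_norm_socTail (x : EuclideanSpace ℝ (Fin (n + 1))) :
    tailNorm x = ‖socTail x‖ := by
  simp [tailNorm, EuclideanSpace.norm_eq]

theorem inner_eq_mul_add_inner_socTail (x y : EuclideanSpace ℝ (Fin (n + 1))) :
    ⟪x, y⟫ = x 0 * y 0 + ⟪socTail x, socTail y⟫ := by
  simp [PiLp.inner_apply, Fin.sum_univ_succ, mul_comm]

theorem eq_of_apply_zero_eq_of_socTail_eq {x y : EuclideanSpace ℝ (Fin (n + 1))} (h0 : x 0 = y 0)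
    (htail : socTail x = socTail y) : x = y := by
  ext i
  refine Fin.cases h0 (fun j => ?_) i
  simpa using congrArg (· j) htail

@[simp]
theorem socHat_apply_zero (x : EuclideanSpace ℝ (Fin (n + 1))) : socHat x 0 = x 0 := rfl

@[simp]
theorem socHat_apply_succ (x : EuclideanSpace ℝ (Fin (n + 1))) (j : Fin n) :
    socHat x j.succ = -x j.succ := by
  simp [socHat, Fin.succ_ne_zero]

theorem socTail_ne_zero_of_mem_socBd {x : EuclideanSpace ℝ (Fin (n + 1))} (hx : x ∈ socBd n)
    (hx0 : x ≠ 0) : socTail x ≠ 0 := by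
  intro htail
  refine hx0 (eq_of_apply_zero_eq_of_socTail_eq ?_ (by simpa using htail))
  rw [← show tailNorm x = x 0 from hx, tailNorm_eq_norm_socTail, htail, norm_zero]
  rfl

end SecondOrderCone

/-- If `x ∈ bd K_{n+1}`, `x ≠ 0`, `y ∈ K_{n+1}` and `⟨x, y⟩ = 0`, then `y = α x̂` for some
`α ≥ 0`. -/
theorem stmt0 (n : ℕ) (x y : EuclideanSpace ℝ (Fin (n + 1)))
    (hx : x ∈ socBd n) (hx0 : x ≠ 0) (hy : y ∈ soc n)
    (hxy : ⟪x, y⟫ = 0) :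
    ∃ α : ℝ, 0 ≤ α ∧ y = α • socHat x := by
  have hx' : ‖socTail x‖ = x 0 := (tailNorm_eq_norm_socTail x).symm.trans hx
  have hy' : ‖socTail y‖ ≤ y 0 := (tailNorm_eq_norm_socTail y).symm.trans_le hy
  have hu := socTail_ne_zero_of_mem_socBd hx hx0
  have hinner : ⟪socTail x, socTail y⟫ = -(‖socTail x‖ * y 0) := by
    rw [inner_eq_mul_add_inner_socTail] at hxy
    rw [hx']; linarith
  have htail := eq_neg_div_smul_of_inner_eq_neg_norm_mul hu hy' hinner
  have hx_pos : 0 < x 0 := hx' ▸ norm_pos_iff.mpr hu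
  refine ⟨y 0 / x 0, div_nonneg ((norm_nonneg _).trans hy') hx_pos.le,
    eq_of_apply_zero_eq_of_socTail_eq ?_ ?_⟩
  · simp [div_mul_cancel₀ _ hx_pos.ne']
  · rw [htail, hx']
    ext j
    simp
end

section
/- Assume n ≥ 2, u* ∈ K_{n+1}, and H ∩ int K_{n+1} = ∅. Then H ∩ bd K_{n+1} = {u*} if and only if Bᵀ û* = 0 and 2‖b‖² < 1. -/
/-- The interior of the second-order cone: `{(x₀; x₁) : ‖x₁‖ < x₀}`. -/
def socInt (n : ℕ) : Set (EuclideanSpace ℝ (Fin (n + 1))) :=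
  {x | tailNorm x < x 0}

/-- `B t` viewed as an element of Euclidean space. -/
def mvE {m p : ℕ} (B : Matrix (Fin m) (Fin p) ℝ) (t : Fin p → ℝ) : EuclideanSpace ℝ (Fin m) :=
  WithLp.toLp 2 (fun i => B.mulVec t i)

/-- A Euclidean vector viewed as a plain function. -/
def toFun {m : ℕ} (x : EuclideanSpace ℝ (Fin m)) : Fin m → ℝ := x

/-!
On the boundary of `K_{n+1}` the Lorentz form `q(x) = x₀² − ‖x₁‖²` vanishes, and its polar form
is `⟨x̂, y⟩`. As `B` is an isometry with `(B t)₀ = ⟨b, t⟩`, for `u*` on the boundary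
`q(u* + B t) = 2⟨Bᵀû*, t⟩ + 2⟨b, t⟩² − ‖t‖²`. If `Bᵀû* ≠ 0`, a small step `t = ε Bᵀû*` makes this
positive, entering the interior (here `u*₀ > 0` because `u* ≠ 0`). So `Bᵀû* = 0`, and then
`u* + B t ∈ K_{n+1}` comes down to `‖t‖² ≤ 2⟨b, t⟩²`: by Cauchy–Schwarz this forces `t = 0` when
`2‖b‖² < 1`, while for `2‖b‖² ≥ 1` the point `t = b` satisfies it.
-/

open Matrix Filter Topology

section SecondOrderCone

variable {n : ℕ}

def lorentzQuad (x : EuclideanSpace ℝ (Fin (n + 1))) : ℝ :=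
  x 0 ^ 2 - ∑ i : Fin n, x i.succ ^ 2

lemma mem_soc_iff_lorentzQuad (x : EuclideanSpace ℝ (Fin (n + 1))) :
    x ∈ soc n ↔ 0 ≤ x 0 ∧ 0 ≤ lorentzQuad x := by
  simp only [soc, tailNorm, lorentzQuad, Set.mem_ofPred_eq, Real.sqrt_le_iff, sub_nonneg]

lemma mem_socInt_iff_lorentzQuad (x : EuclideanSpace ℝ (Fin (n + 1))) :
    x ∈ socInt n ↔ 0 < x 0 ∧ 0 < lorentzQuad x := by
  simp only [socInt, tailNorm, lorentzQuad, Set.mem_ofPred_eq, sub_pos]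
  constructor
  · intro h
    have h0 := (Real.sqrt_nonneg _).trans_lt h
    exact ⟨h0, (Real.sqrt_lt' h0).1 h⟩
  · rintro ⟨h0, h⟩
    exact (Real.sqrt_lt' h0).2 h

lemma mem_socBd_iff (x : EuclideanSpace ℝ (Fin (n + 1))) :
    x ∈ socBd n ↔ x ∈ soc n ∧ x ∉ socInt n := by
  simp only [socBd, soc, socInt, Set.mem_ofPred_eq, not_lt, le_antisymm_iff]

lemma lorentzQuad_eq_zero_of_mem_socBd {x : EuclideanSpace ℝ (Fin (n + 1))} (hx : x ∈ socBd n) :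
    lorentzQuad x = 0 := by
  have hx' : tailNorm x = x 0 := hx
  rw [lorentzQuad, ← hx', tailNorm, Real.sq_sqrt (by positivity), sub_self]

lemma apply_zero_pos_of_mem_socBd {x : EuclideanSpace ℝ (Fin (n + 1))} (hx : x ∈ socBd n)
    (hx0 : x ≠ 0) : 0 < x 0 := by
  have h0 : 0 ≤ x 0 := (Real.sqrt_nonneg _).trans_eq hx
  refine h0.lt_of_ne fun h => hx0 ?_
  have htail : ∑ i : Fin n, x i.succ ^ 2 = 0 := by
    simpa [lorentzQuad, ← h] using lorentzQuad_eq_zero_of_mem_socBd hx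
  rw [← norm_eq_zero, ← sq_eq_zero_iff, EuclideanSpace.norm_sq_eq, Fin.sum_univ_succ]
  simp [← h, htail]

lemma lorentzQuad_add (x y : EuclideanSpace ℝ (Fin (n + 1))) :
    lorentzQuad (x + y) =
      lorentzQuad x + 2 * (toFun (socHat x) ⬝ᵥ toFun y) + lorentzQuad y := by
  simp only [lorentzQuad, socHat, toFun, dotProduct, Fin.sum_univ_succ, PiLp.add_apply,
    add_sq, Finset.sum_add_distrib, mul_assoc, ← Finset.mul_sum, if_pos, Fin.succ_ne_zero,
    if_false, neg_mul, Finset.sum_neg_distrib]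
  ring

variable {p : ℕ} {B : Matrix (Fin (n + 1)) (Fin p) ℝ}

lemma apply_zero_add_mvE (x : EuclideanSpace ℝ (Fin (n + 1))) (t : Fin p → ℝ) :
    (x + mvE B t) 0 = x 0 + B 0 ⬝ᵥ t :=
  rfl

lemma mvE_eq_zero_iff (hB : Bᵀ * B = 1) {t : Fin p → ℝ} : mvE B t = 0 ↔ t = 0 := by
  refine ⟨fun h => ?_, fun h => by ext; simp [h, mvE]⟩
  have hBt : B *ᵥ t = 0 := congrArg toFun h
  rw [← one_mulVec t, ← hB, ← mulVec_mulVec, hBt, mulVec_zero]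

lemma lorentzQuad_mvE (hB : Bᵀ * B = 1) (t : Fin p → ℝ) :
    lorentzQuad (mvE B t) = 2 * (B 0 ⬝ᵥ t) ^ 2 - t ⬝ᵥ t := by
  have hisom : (B *ᵥ t) ⬝ᵥ (B *ᵥ t) = t ⬝ᵥ t := by
    rw [dotProduct_mulVec, ← mulVec_transpose, mulVec_mulVec, hB, one_mulVec]
  have hsplit : (B *ᵥ t) ⬝ᵥ (B *ᵥ t) = (B *ᵥ t) 0 ^ 2 + ∑ i : Fin n, (B *ᵥ t) i.succ ^ 2 := by
    simp only [dotProduct, Fin.sum_univ_succ, sq]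
  have hrow : (B *ᵥ t) 0 = B 0 ⬝ᵥ t := rfl
  rw [← hisom, hsplit, hrow]
  simp only [lorentzQuad, mvE, PiLp.toLp_apply, hrow]
  ring

lemma socHat_dotProduct_mvE (x : EuclideanSpace ℝ (Fin (n + 1))) (t : Fin p → ℝ) :
    toFun (socHat x) ⬝ᵥ toFun (mvE B t) = (Bᵀ *ᵥ toFun (socHat x)) ⬝ᵥ t := by
  rw [mulVec_transpose, ← dotProduct_mulVec]
  rfl

lemma lorentzQuad_add_mvE (hB : Bᵀ * B = 1) {x : EuclideanSpace ℝ (Fin (n + 1))}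
    (hx : lorentzQuad x = 0) (t : Fin p → ℝ) :
    lorentzQuad (x + mvE B t) =
      2 * ((Bᵀ *ᵥ toFun (socHat x)) ⬝ᵥ t) + 2 * (B 0 ⬝ᵥ t) ^ 2 - t ⬝ᵥ t := by
  rw [lorentzQuad_add, hx, socHat_dotProduct_mvE, lorentzQuad_mvE hB]
  ring

lemma exists_add_mvE_mem_socInt (hB : Bᵀ * B = 1) {x : EuclideanSpace ℝ (Fin (n + 1))}
    (hx : x ∈ socBd n) (hc : Bᵀ *ᵥ toFun (socHat x) ≠ 0) :
    ∃ t, x + mvE B t ∈ socInt n := by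
  set c := Bᵀ *ᵥ toFun (socHat x)
  have hx0 : 0 < x 0 := apply_zero_pos_of_mem_socBd hx fun h => hc (by
    simp [c, h, socHat, toFun, ← Pi.zero_def])
  have hcc : 0 < c ⬝ᵥ c := lt_of_le_of_ne (Finset.sum_nonneg fun i _ => mul_self_nonneg (c i))
    (Ne.symm (dotProduct_self_eq_zero.not.2 hc))
  have hfirst : Tendsto (fun ε : ℝ => x 0 + ε * (B 0 ⬝ᵥ c)) (𝓝 0) (𝓝 (x 0)) :=
    (continuous_const.add (continuous_id.mul continuous_const)).tendsto' 0 _ (by simp)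
  have hsmall : ∀ᶠ ε in 𝓝[>] (0 : ℝ), 0 < ε ∧ ε < 2 ∧ 0 < x 0 + ε * (B 0 ⬝ᵥ c) :=
    Eventually.and self_mem_nhdsWithin (nhdsWithin_le_nhds <|
      Eventually.and (Iio_mem_nhds two_pos) (hfirst.eventually (lt_mem_nhds hx0)))
  obtain ⟨ε, hε0, hε2, hεfirst⟩ := hsmall.exists
  refine ⟨ε • c, (mem_socInt_iff_lorentzQuad _).2 ⟨?_, ?_⟩⟩
  · rwa [apply_zero_add_mvE, dotProduct_smul, smul_eq_mul]
  · rw [lorentzQuad_add_mvE hB (lorentzQuad_eq_zero_of_mem_socBd hx)]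
    simp only [dotProduct_smul, smul_dotProduct, smul_eq_mul]
    nlinarith [mul_pos hε0 (mul_pos (sub_pos.2 hε2) hcc), sq_nonneg (ε * (B 0 ⬝ᵥ c))]

lemma add_mvE_row_zero_mem_soc (hB : Bᵀ * B = 1) {x : EuclideanSpace ℝ (Fin (n + 1))}
    (hx : x ∈ socBd n) (hc : Bᵀ *ᵥ toFun (socHat x) = 0) (hb : 1 ≤ 2 * ∑ j, B 0 j ^ 2) :
    x + mvE B (B 0) ∈ soc n := by
  have hbb : B 0 ⬝ᵥ B 0 = ∑ j, B 0 j ^ 2 := by simp only [dotProduct, sq]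
  have hx0 : 0 ≤ x 0 := ((mem_soc_iff_lorentzQuad x).1 ((mem_socBd_iff x).1 hx).1).1
  rw [mem_soc_iff_lorentzQuad, apply_zero_add_mvE,
    lorentzQuad_add_mvE hB (lorentzQuad_eq_zero_of_mem_socBd hx), hc, zero_dotProduct, hbb]
  constructor <;> nlinarith

lemma eq_zero_of_add_mvE_mem_soc (hB : Bᵀ * B = 1) {x : EuclideanSpace ℝ (Fin (n + 1))}
    (hx : lorentzQuad x = 0) (hc : Bᵀ *ᵥ toFun (socHat x) = 0) (hb : 2 * ∑ j, B 0 j ^ 2 < 1)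
    {t : Fin p → ℝ} (ht : x + mvE B t ∈ soc n) : t = 0 := by
  have hQ := ((mem_soc_iff_lorentzQuad _).1 ht).2
  have htt : t ⬝ᵥ t = ∑ j, t j ^ 2 := by simp only [dotProduct, sq]
  rw [lorentzQuad_add_mvE hB hx, hc, zero_dotProduct, htt] at hQ
  have hCS : (B 0 ⬝ᵥ t) ^ 2 ≤ (∑ j, B 0 j ^ 2) * ∑ j, t j ^ 2 :=
    Finset.sum_mul_sq_le_sq_mul_sq _ _ _
  have htt0 : 0 ≤ ∑ j, t j ^ 2 := by positivity
  rw [← dotProduct_self_eq_zero, htt]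
  nlinarith

end SecondOrderCone

theorem stmt1_general (n p : ℕ)
    (B : Matrix (Fin (n + 1)) (Fin p) ℝ) (hB : B.transpose * B = 1)
    (ustar : EuclideanSpace ℝ (Fin (n + 1))) (hustar : ustar ∈ soc n)
    (H : Set (EuclideanSpace ℝ (Fin (n + 1))))
    (hH : H = {u | ∃ t : Fin p → ℝ, u = ustar + mvE B t})
    (hdisj : H ∩ socInt n = ∅) :
    H ∩ socBd n = {ustar} ↔
      (B.transpose.mulVec (toFun (socHat ustar)) = 0 ∧ 2 * ∑ j, B 0 j ^ 2 < 1) := by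
  have hmemH : ∀ t, ustar + mvE B t ∈ H := fun t => hH ▸ ⟨t, rfl⟩
  have hnotint : ∀ t, ustar + mvE B t ∉ socInt n := fun t ht => hdisj.subset ⟨hmemH t, ht⟩
  have hmvE0 : mvE B 0 = 0 := (mvE_eq_zero_iff hB).2 rfl
  have hbd : ustar ∈ socBd n := (mem_socBd_iff _).2 ⟨hustar, by simpa [hmvE0] using hnotint 0⟩
  have hslice : H ∩ socBd n = {ustar} ↔ ∀ t, ustar + mvE B t ∈ soc n → t = 0 := by
    rw [Set.eq_singleton_iff_unique_mem]
    refine ⟨fun h t ht => (mvE_eq_zero_iff hB).1 (add_eq_left.1 (h.2 _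
      ⟨hmemH t, (mem_socBd_iff _).2 ⟨ht, hnotint t⟩⟩)), fun h => ⟨⟨?_, hbd⟩, ?_⟩⟩
    · simpa [hmvE0] using hmemH 0
    · rintro _ ⟨hxH, hxbd⟩
      obtain ⟨t, rfl⟩ := hH ▸ hxH
      rw [h t ((mem_socBd_iff _).1 hxbd).1, hmvE0, add_zero]
  rw [hslice]
  constructor
  · intro h
    have hc : Bᵀ *ᵥ toFun (socHat ustar) = 0 := by
      by_contra hc
      obtain ⟨t, ht⟩ := exists_add_mvE_mem_socInt hB hbd hc
      exact hnotint t ht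
    refine ⟨hc, not_le.1 fun hb => ?_⟩
    have hb0 : B 0 = 0 := h _ (add_mvE_row_zero_mem_soc hB hbd hc hb)
    norm_num [hb0] at hb
  · rintro ⟨hc, hb⟩ t ht
    exact eq_zero_of_add_mvE_mem_soc hB (lorentzQuad_eq_zero_of_mem_socBd hbd) hc hb ht

/-- Assume `n ≥ 2`, `u* ∈ K_{n+1}`, and `H ∩ int K_{n+1} = ∅`, where
`H = {u* + B t : t ∈ ℝ^p}` and `B` has orthonormal columns with first row `bᵀ`. Then
`H ∩ bd K_{n+1} = {u*}` if and only if `Bᵀ û* = 0` and `2‖b‖² < 1`. -/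
theorem stmt1 (n p : ℕ) (hn : 2 ≤ n)
    (B : Matrix (Fin (n + 1)) (Fin p) ℝ) (hB : B.transpose * B = 1)
    (ustar : EuclideanSpace ℝ (Fin (n + 1))) (hustar : ustar ∈ soc n)
    (H : Set (EuclideanSpace ℝ (Fin (n + 1))))
    (hH : H = {u | ∃ t : Fin p → ℝ, u = ustar + mvE B t})
    (hdisj : H ∩ socInt n = ∅) :
    H ∩ socBd n = {ustar} ↔
      (B.transpose.mulVec (toFun (socHat ustar)) = 0 ∧ 2 * ∑ j, B 0 j ^ 2 < 1) :=
  stmt1_general n p B hB ustar hustar H hH hdisj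
end

section
/- Assume n ≥ 2, H = {B t : t ∈ ℝ^p} with Bᵀ B = I_p, and H ∩ int K_{n+1} = ∅. Then there exists d ∈ bd K_{n+1} with d ≠ 0 such that H ∩ K_{n+1} = {α d : α ≥ 0} if and only if ‖b‖² = 1/2, where bᵀ is the first row of B. Moreover, in that case one may take d = B b / ‖b‖. -/
open Matrix

section Cone

variable {n : ℕ}

lemma tailNorm_sq (x : EuclideanSpace ℝ (Fin (n + 1))) :
    tailNorm x ^ 2 = ∑ i, x i ^ 2 - x 0 ^ 2 := by
  rw [tailNorm, Real.sq_sqrt (by positivity), Fin.sum_univ_succ]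
  ring

lemma tailNorm_smul (c : ℝ) (x : EuclideanSpace ℝ (Fin (n + 1))) :
    tailNorm (c • x) = |c| * tailNorm x := by
  simp only [tailNorm, PiLp.smul_apply, smul_eq_mul, mul_pow, ← Finset.mul_sum]
  rw [Real.sqrt_mul (sq_nonneg c), Real.sqrt_sq_eq_abs]

lemma mem_soc_iff_sq (x : EuclideanSpace ℝ (Fin (n + 1))) :
    x ∈ soc n ↔ 0 ≤ x 0 ∧ ∑ i, x i ^ 2 ≤ 2 * x 0 ^ 2 := by
  have hsq := tailNorm_sq x
  have hnn : 0 ≤ tailNorm x := Real.sqrt_nonneg _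
  change tailNorm x ≤ x 0 ↔ _
  constructor
  · intro h
    exact ⟨hnn.trans h, by nlinarith⟩
  · rintro ⟨h0, h⟩
    exact (pow_le_pow_iff_left₀ hnn h0 two_ne_zero).mp (by linarith)

lemma mem_socInt_iff_sq (x : EuclideanSpace ℝ (Fin (n + 1))) :
    x ∈ socInt n ↔ 0 < x 0 ∧ ∑ i, x i ^ 2 < 2 * x 0 ^ 2 := by
  have hsq := tailNorm_sq x
  have hnn : 0 ≤ tailNorm x := Real.sqrt_nonneg _
  change tailNorm x < x 0 ↔ _
  constructor
  · intro h
    exact ⟨hnn.trans_lt h, by nlinarith⟩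
  · rintro ⟨h0, h⟩
    exact (pow_lt_pow_iff_left₀ hnn h0.le two_ne_zero).mp (by linarith)

lemma mem_socBd_iff_sq (x : EuclideanSpace ℝ (Fin (n + 1))) :
    x ∈ socBd n ↔ 0 ≤ x 0 ∧ ∑ i, x i ^ 2 = 2 * x 0 ^ 2 := by
  have hsq := tailNorm_sq x
  have hnn : 0 ≤ tailNorm x := Real.sqrt_nonneg _
  change tailNorm x = x 0 ↔ _
  constructor
  · intro h
    rw [h] at hsq hnn
    exact ⟨hnn, by linarith⟩
  · rintro ⟨h0, h⟩
    exact (pow_left_inj₀ hnn h0 two_ne_zero).mp (by linarith)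

lemma smul_mem_socBd {c : ℝ} (hc : 0 ≤ c) {x : EuclideanSpace ℝ (Fin (n + 1))}
    (hx : x ∈ socBd n) : c • x ∈ socBd n := by
  change tailNorm (c • x) = c * x 0
  rw [tailNorm_smul, abs_of_nonneg hc, hx]

end Cone

lemma setOf_nonneg_smul_smul_of_pos {V : Type*} [AddCommGroup V] [Module ℝ V] {c : ℝ}
    (hc : 0 < c) (v : V) :
    {x | ∃ α : ℝ, 0 ≤ α ∧ x = α • c • v} = {x | ∃ α : ℝ, 0 ≤ α ∧ x = α • v} := by
  ext x
  constructor
  · rintro ⟨α, hα, rfl⟩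
    exact ⟨α * c, by positivity, smul_smul α c v⟩
  · rintro ⟨α, hα, rfl⟩
    exact ⟨α / c, by positivity, by rw [smul_smul, div_mul_cancel₀ α hc.ne']⟩

section DotProduct

variable {ι : Type*} [Fintype ι]

lemma dotProduct_sub_smul_self (c : ℝ) (b t : ι → ℝ) :
    (t - c • b) ⬝ᵥ (t - c • b) = t ⬝ᵥ t - 2 * c * (b ⬝ᵥ t) + c ^ 2 * (b ⬝ᵥ b) := by
  simp only [sub_dotProduct, dotProduct_sub, smul_dotProduct, dotProduct_smul, smul_eq_mul,
    dotProduct_comm t b]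
  ring

lemma eq_smul_of_dotProduct_self_le {b t : ι → ℝ} (hb : b ⬝ᵥ b ≤ 1 / 2)
    (ht : t ⬝ᵥ t ≤ 2 * (b ⬝ᵥ t) ^ 2) :
    t = (2 * (b ⬝ᵥ t)) • b := by
  have hexp := dotProduct_sub_smul_self (2 * (b ⬝ᵥ t)) b t
  have hnn : 0 ≤ (t - (2 * (b ⬝ᵥ t)) • b) ⬝ᵥ (t - (2 * (b ⬝ᵥ t)) • b) :=
    Finset.sum_nonneg fun i _ => mul_self_nonneg _
  have hzero : (t - (2 * (b ⬝ᵥ t)) • b) ⬝ᵥ (t - (2 * (b ⬝ᵥ t)) • b) = 0 := by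
    nlinarith [sq_nonneg (b ⬝ᵥ t)]
  exact sub_eq_zero.mp (dotProduct_self_eq_zero.mp hzero)

lemma eq_zero_of_dotProduct_self_le {b t : ι → ℝ} (hb : b ⬝ᵥ b < 1 / 2)
    (ht : t ⬝ᵥ t ≤ 2 * (b ⬝ᵥ t) ^ 2) :
    t = 0 := by
  have ht' := eq_smul_of_dotProduct_self_le hb.le ht
  have hbt : b ⬝ᵥ t = 2 * (b ⬝ᵥ t) * (b ⬝ᵥ b) := by
    conv_lhs => rw [ht', dotProduct_smul, smul_eq_mul]
  have hbt0 : b ⬝ᵥ t = 0 := by nlinarith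
  rw [ht', hbt0, mul_zero, zero_smul]

end DotProduct

section Orthonormal

variable {n p : ℕ} {B : Matrix (Fin (n + 1)) (Fin p) ℝ}

lemma mvE_apply_zero (t : Fin p → ℝ) : mvE B t 0 = B 0 ⬝ᵥ t := rfl

lemma mvE_smul (c : ℝ) (t : Fin p → ℝ) : mvE B (c • t) = c • mvE B t := by
  ext i
  simp [mvE, mulVec_smul]

lemma mvE_zero : mvE B 0 = 0 := by
  simpa using mvE_smul (B := B) 0 0

lemma sum_sq_mvE (hB : Bᵀ * B = 1) (t : Fin p → ℝ) : ∑ i, mvE B t i ^ 2 = t ⬝ᵥ t := by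
  calc ∑ i, mvE B t i ^ 2 = (B *ᵥ t) ⬝ᵥ (B *ᵥ t) := by simp [mvE, dotProduct, sq]
    _ = t ⬝ᵥ (Bᵀ *ᵥ (B *ᵥ t)) := by rw [dotProduct_mulVec, ← mulVec_transpose, dotProduct_comm]
    _ = t ⬝ᵥ t := by rw [mulVec_mulVec, hB, one_mulVec]

lemma mvE_mem_soc_iff (hB : Bᵀ * B = 1) (t : Fin p → ℝ) :
    mvE B t ∈ soc n ↔ 0 ≤ B 0 ⬝ᵥ t ∧ t ⬝ᵥ t ≤ 2 * (B 0 ⬝ᵥ t) ^ 2 := by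
  rw [mem_soc_iff_sq, sum_sq_mvE hB, mvE_apply_zero]

lemma row_dotProduct_self_le_half (hB : Bᵀ * B = 1) (hint : ∀ t, mvE B t ∉ socInt n) :
    B 0 ⬝ᵥ B 0 ≤ 1 / 2 := by
  by_contra! hb
  apply hint (B 0)
  rw [mem_socInt_iff_sq, sum_sq_mvE hB, mvE_apply_zero]
  exact ⟨by linarith, by nlinarith⟩

lemma mvE_row_mem_socBd (hB : Bᵀ * B = 1) (hb : B 0 ⬝ᵥ B 0 = 1 / 2) :
    mvE B (B 0) ∈ socBd n := by
  rw [mem_socBd_iff_sq, sum_sq_mvE hB, mvE_apply_zero, hb]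
  norm_num

lemma mvE_row_ne_zero (hb : B 0 ⬝ᵥ B 0 ≠ 0) : mvE B (B 0) ≠ 0 := fun h =>
  hb (by rw [← mvE_apply_zero, h]; rfl)

lemma range_mvE_inter_soc_of_lt (hB : Bᵀ * B = 1) (hb : B 0 ⬝ᵥ B 0 < 1 / 2) :
    {u | ∃ t, u = mvE B t} ∩ soc n = {0} := by
  ext x
  constructor
  · rintro ⟨⟨t, rfl⟩, h⟩
    rw [eq_zero_of_dotProduct_self_le hb ((mvE_mem_soc_iff hB t).1 h).2, mvE_zero]
    rfl
  · rintro rfl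
    refine ⟨⟨0, mvE_zero.symm⟩, ?_⟩
    rw [← mvE_zero, mvE_mem_soc_iff hB]
    simp

lemma range_mvE_inter_soc_of_eq (hB : Bᵀ * B = 1) (hb : B 0 ⬝ᵥ B 0 = 1 / 2) :
    {u | ∃ t, u = mvE B t} ∩ soc n = {x | ∃ α : ℝ, 0 ≤ α ∧ x = α • mvE B (B 0)} := by
  ext x
  constructor
  · rintro ⟨⟨t, rfl⟩, h⟩
    rw [mvE_mem_soc_iff hB] at h
    refine ⟨2 * (B 0 ⬝ᵥ t), by linarith [h.1], ?_⟩
    rw [← mvE_smul, ← eq_smul_of_dotProduct_self_le hb.le h.2]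
  · rintro ⟨α, hα, rfl⟩
    rw [← mvE_smul]
    refine ⟨⟨_, rfl⟩, (mvE_mem_soc_iff hB _).2 ?_⟩
    simp only [dotProduct_smul, smul_dotProduct, smul_eq_mul, hb]
    constructor <;> nlinarith

end Orthonormal

theorem stmt2_general (n p : ℕ)
    (B : Matrix (Fin (n + 1)) (Fin p) ℝ) (hB : B.transpose * B = 1)
    (H : Set (EuclideanSpace ℝ (Fin (n + 1))))
    (hH : H = {u | ∃ t : Fin p → ℝ, u = mvE B t})
    (hdisj : H ∩ socInt n = ∅) :
    ((∃ d : EuclideanSpace ℝ (Fin (n + 1)), d ∈ socBd n ∧ d ≠ 0 ∧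
        H ∩ soc n = {x | ∃ α : ℝ, 0 ≤ α ∧ x = α • d}) ↔ ∑ j, B 0 j ^ 2 = 1 / 2)
      ∧ (∑ j, B 0 j ^ 2 = 1 / 2 →
          H ∩ soc n =
            {x | ∃ α : ℝ, 0 ≤ α ∧
              x = α • ((Real.sqrt (∑ j, B 0 j ^ 2))⁻¹ • mvE B (fun j => B 0 j))}) := by
  subst hH
  have hsum : ∑ j, B 0 j ^ 2 = B 0 ⬝ᵥ B 0 := by simp only [dotProduct, sq]
  have hle := row_dotProduct_self_le_half hB fun t ht => hdisj.subset ⟨⟨t, rfl⟩, ht⟩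
  have hray (hb : B 0 ⬝ᵥ B 0 = 1 / 2) : {u | ∃ t, u = mvE B t} ∩ soc n =
      {x | ∃ α : ℝ, 0 ≤ α ∧ x = α • (√(B 0 ⬝ᵥ B 0))⁻¹ • mvE B (B 0)} := by
    rw [setOf_nonneg_smul_smul_of_pos (by rw [hb]; positivity), range_mvE_inter_soc_of_eq hB hb]
  rw [hsum]
  refine ⟨⟨?_, fun hb => ⟨_, ?_, ?_, hray hb⟩⟩, hray⟩
  · rintro ⟨d, -, hd0, hd⟩
    refine hle.eq_or_lt.resolve_right fun hlt => hd0 ?_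
    have hd1 : d ∈ {u | ∃ t, u = mvE B t} ∩ soc n :=
      hd ▸ ⟨1, zero_le_one, (one_smul ℝ d).symm⟩
    rw [range_mvE_inter_soc_of_lt hB hlt] at hd1
    exact hd1
  · exact smul_mem_socBd (by positivity) (mvE_row_mem_socBd hB hb)
  · exact smul_ne_zero (by rw [hb]; positivity) (mvE_row_ne_zero (by rw [hb]; norm_num))

/-- Assume `n ≥ 2`, `H = {B t : t ∈ ℝ^p}` with `Bᵀ B = I_p`, and `H ∩ int K_{n+1} = ∅`. Then
there exists `d ∈ bd K_{n+1}` with `d ≠ 0` such that `H ∩ K_{n+1} = {α d : α ≥ 0}` if and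
only if `‖b‖² = 1/2`, where `bᵀ` is the first row of `B`. Moreover, in that case one may take
`d = B b / ‖b‖`. -/
theorem stmt2 (n p : ℕ) (hn : 2 ≤ n)
    (B : Matrix (Fin (n + 1)) (Fin p) ℝ) (hB : B.transpose * B = 1)
    (H : Set (EuclideanSpace ℝ (Fin (n + 1))))
    (hH : H = {u | ∃ t : Fin p → ℝ, u = mvE B t})
    (hdisj : H ∩ socInt n = ∅) :
    ((∃ d : EuclideanSpace ℝ (Fin (n + 1)), d ∈ socBd n ∧ d ≠ 0 ∧
        H ∩ soc n = {x | ∃ α : ℝ, 0 ≤ α ∧ x = α • d}) ↔ ∑ j, B 0 j ^ 2 = 1 / 2)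
      ∧ (∑ j, B 0 j ^ 2 = 1 / 2 →
          H ∩ soc n =
            {x | ∃ α : ℝ, 0 ≤ α ∧
              x = α • ((Real.sqrt (∑ j, B 0 j ^ 2))⁻¹ • mvE B (fun j => B 0 j))}) :=
  stmt2_general n p B hB H hH hdisj
end

section
/- Assume n ≥ 2, H = {B t : t ∈ ℝ^p} with Bᵀ B = I_p, H ∩ int K_{n+1} = ∅, and H ∩ K_{n+1} = {α d : α ≥ 0} for some d ∈ bd K_{n+1} with d ≠ 0. Then for every u ∈ H with u ∉ {α d : α ∈ ℝ}, one has −û ∉ K_{n+1}. -/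
section SecondOrderCone

variable {n : ℕ}

lemma tailNorm_neg (x : EuclideanSpace ℝ (Fin (n + 1))) : tailNorm (-x) = tailNorm x := by
  simp only [tailNorm, PiLp.neg_apply, neg_sq]

lemma tailNorm_socHat (x : EuclideanSpace ℝ (Fin (n + 1))) : tailNorm (socHat x) = tailNorm x := by
  simp only [tailNorm, socHat, Fin.succ_ne_zero, if_false, neg_sq]

lemma neg_socHat_mem_soc_iff (x : EuclideanSpace ℝ (Fin (n + 1))) :
    -socHat x ∈ soc n ↔ -x ∈ soc n := by
  have hhead : (socHat x) 0 = x 0 := by simp [socHat]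
  simp only [soc, Set.mem_ofPred_eq, tailNorm_neg, tailNorm_socHat, PiLp.neg_apply, hhead]

end SecondOrderCone

lemma mvE_neg {m p : ℕ} (B : Matrix (Fin m) (Fin p) ℝ) (t : Fin p → ℝ) :
    mvE B (-t) = -mvE B t := by
  ext i
  simp [mvE, Matrix.mulVec_neg]

theorem stmt5_general (n p : ℕ)
    (B : Matrix (Fin (n + 1)) (Fin p) ℝ)
    (H : Set (EuclideanSpace ℝ (Fin (n + 1))))
    (hH : H = {u | ∃ t : Fin p → ℝ, u = mvE B t})
    (d : EuclideanSpace ℝ (Fin (n + 1)))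
    (hray : H ∩ soc n = {x | ∃ α : ℝ, 0 ≤ α ∧ x = α • d}) :
    ∀ u ∈ H, u ∉ {x | ∃ α : ℝ, x = α • d} → -(socHat u) ∉ soc n := by
  intro u hu hu_notin_span hu_hat
  have hneg_mem : -u ∈ H := by
    subst hH
    obtain ⟨t, rfl⟩ := hu
    exact ⟨-t, (mvE_neg B t).symm⟩
  have hneg_ray : -u ∈ H ∩ soc n := ⟨hneg_mem, (neg_socHat_mem_soc_iff u).mp hu_hat⟩
  rw [hray] at hneg_ray
  obtain ⟨α, -, hα⟩ := hneg_ray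
  exact hu_notin_span ⟨-α, by rw [neg_smul, ← hα, neg_neg]⟩

/-- Assume `n ≥ 2`, `H = {B t : t ∈ ℝ^p}` with `Bᵀ B = I_p`, `H ∩ int K_{n+1} = ∅`, and
`H ∩ K_{n+1} = {α d : α ≥ 0}` for some `d ∈ bd K_{n+1}` with `d ≠ 0`. Then for every `u ∈ H`
with `u ∉ {α d : α ∈ ℝ}`, one has `−û ∉ K_{n+1}`. -/
theorem stmt5 (n p : ℕ) (hn : 2 ≤ n)
    (B : Matrix (Fin (n + 1)) (Fin p) ℝ) (hB : B.transpose * B = 1)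
    (H : Set (EuclideanSpace ℝ (Fin (n + 1))))
    (hH : H = {u | ∃ t : Fin p → ℝ, u = mvE B t})
    (hdisj : H ∩ socInt n = ∅)
    (d : EuclideanSpace ℝ (Fin (n + 1))) (hd : d ∈ socBd n) (hd0 : d ≠ 0)
    (hray : H ∩ soc n = {x | ∃ α : ℝ, 0 ≤ α ∧ x = α • d}) :
    ∀ u ∈ H, u ∉ {x | ∃ α : ℝ, x = α • d} → -(socHat u) ∉ soc n :=
  stmt5_general n p B H hH d hray
end

section
/- Let p ≤ n and let B ∈ ℝ^{(n+1)×p} have orthonormal columns (Bᵀ B = I_p), and let bᵀ ∈ ℝ^{1×p} denote the first row of B. If ‖b‖² < 1/2, then there exists a vector y ∈ int K_{n+1} with y ≠ 0 such that Bᵀ y = 0. -/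
/-! The residual `y = e₀ - B Bᵀ e₀` of `e₀` after orthogonal projection onto the column space of `B`
lies in `ker Bᵀ`. Being an orthogonal projection of a unit vector, it satisfies
`‖y‖² = ⟪y, e₀⟫ = y₀ = 1 - ‖b‖²`, so `‖y‖² < 2 y₀²` exactly when `‖b‖² < 1/2`; this says that the
tail of `y` is shorter than its head, i.e. `y` lies in the interior of the cone. -/

theorem mem_socInt_iff {n : ℕ} (x : EuclideanSpace ℝ (Fin (n + 1))) :
    x ∈ socInt n ↔ 0 < x 0 ∧ ∑ i, x i ^ 2 < 2 * x 0 ^ 2 := by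
  have hsum : ∑ i, x i ^ 2 = x 0 ^ 2 + ∑ i : Fin n, x i.succ ^ 2 := Fin.sum_univ_succ _
  rw [hsum, socInt, Set.mem_ofPred_eq, tailNorm]
  constructor
  · intro h
    have hpos : 0 < x 0 := (Real.sqrt_nonneg _).trans_lt h
    exact ⟨hpos, by linarith [(Real.sqrt_lt' hpos).mp h]⟩
  · rintro ⟨hpos, h⟩
    exact (Real.sqrt_lt' hpos).mpr (by linarith)

namespace Matrix

variable {ι κ : Type*} [Fintype ι] [Fintype κ] [DecidableEq κ]
  {B : Matrix ι κ ℝ}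

theorem transpose_mulVec_sub_mulVec_transpose_mulVec (hB : Bᵀ * B = 1) (v : ι → ℝ) :
    Bᵀ *ᵥ (v - B *ᵥ (Bᵀ *ᵥ v)) = 0 := by
  rw [mulVec_sub, mulVec_mulVec, hB, one_mulVec, sub_self]

theorem dotProduct_self_sub_mulVec_transpose_mulVec (hB : Bᵀ * B = 1) (v : ι → ℝ) :
    (v - B *ᵥ (Bᵀ *ᵥ v)) ⬝ᵥ (v - B *ᵥ (Bᵀ *ᵥ v)) = (v - B *ᵥ (Bᵀ *ᵥ v)) ⬝ᵥ v := by
  rw [dotProduct_sub (v - B *ᵥ (Bᵀ *ᵥ v)), dotProduct_mulVec, ← mulVec_transpose,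
    transpose_mulVec_sub_mulVec_transpose_mulVec hB, zero_dotProduct, sub_zero]

end Matrix

open Matrix in
theorem stmt6_general (n p : ℕ)
    (B : Matrix (Fin (n + 1)) (Fin p) ℝ) (hB : B.transpose * B = 1)
    (hb : ∑ j, B 0 j ^ 2 < 1 / 2) :
    ∃ y : EuclideanSpace ℝ (Fin (n + 1)),
      y ∈ socInt n ∧ y ≠ 0 ∧ B.transpose.mulVec (toFun y) = 0 := by
  set e₀ : Fin (n + 1) → ℝ := Pi.single 0 1
  set r := e₀ - B *ᵥ (Bᵀ *ᵥ e₀)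
  have hr₀ : r 0 = 1 - ∑ j, B 0 j ^ 2 := by
    simp [r, e₀, mulVec, dotProduct, sq]
  have hnorm : ∑ i, r i ^ 2 = r 0 := by
    have h := dotProduct_self_sub_mulVec_transpose_mulVec hB e₀
    rwa [dotProduct_single_one, dotProduct, ← Finset.sum_congr rfl fun i _ => sq (r i)] at h
  refine ⟨WithLp.toLp 2 r, ?_, ?_, transpose_mulVec_sub_mulVec_transpose_mulVec hB e₀⟩
  · rw [mem_socInt_iff]
    show 0 < r 0 ∧ ∑ i, r i ^ 2 < 2 * r 0 ^ 2
    rw [hnorm, hr₀]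
    constructor <;> nlinarith
  · intro h
    have : r 0 = 0 := congrArg (fun y : EuclideanSpace ℝ (Fin (n + 1)) => y 0) h
    linarith

/-- Let `p ≤ n` and let `B ∈ ℝ^{(n+1)×p}` have orthonormal columns, with first row `bᵀ`.
If `‖b‖² < 1/2`, then there exists `y ∈ int K_{n+1}` with `y ≠ 0` such that `Bᵀ y = 0`. -/
theorem stmt6 (n p : ℕ) (hp : p ≤ n)
    (B : Matrix (Fin (n + 1)) (Fin p) ℝ) (hB : B.transpose * B = 1)
    (hb : ∑ j, B 0 j ^ 2 < 1 / 2) :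
    ∃ y : EuclideanSpace ℝ (Fin (n + 1)),
      y ∈ socInt n ∧ y ≠ 0 ∧ B.transpose.mulVec (toFun y) = 0 :=
  stmt6_general n p B hB hb
end

section
/- Let {x_k} be a sequence of real numbers with x_k > 0 for all k and x_k → 0 as k → ∞. Assume there exist C > 0, a positive integer q, an index k̃ ∈ ℕ, and a real function h that is given by a power series convergent in a neighborhood of 0, such that x_{k+1} ≤ x_k (1 − C x_k^q + x_k^{q+1} h(x_k)) for all k ≥ k̃. Then limsup_{k→∞} (qC)^{1/q} k^{1/q} x_k ≤ 1. -/
open Filter Topology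

/-- Let `{x_k}` be positive reals tending to `0`, and suppose
`x_{k+1} ≤ x_k (1 − C x_k^q + x_k^{q+1} h(x_k))` for all `k ≥ k̃`, where `C > 0`, `q` is a
positive integer and `h` is given by a power series convergent near `0` (i.e. `h` is analytic
at `0`). Then `limsup (qC)^{1/q} k^{1/q} x_k ≤ 1`. -/
theorem stmt7 (x : ℕ → ℝ) (hpos : ∀ k, 0 < x k) (hlim : Tendsto x atTop (𝓝 0))
    (C : ℝ) (hC : 0 < C) (q : ℕ) (hq : 1 ≤ q) (ktil : ℕ)
    (h : ℝ → ℝ) (hh : AnalyticAt ℝ h 0)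
    (hrec : ∀ k, ktil ≤ k →
      x (k + 1) ≤ x k * (1 - C * x k ^ q + x k ^ (q + 1) * h (x k))) :
    limsup (fun k : ℕ => ((q : ℝ) * C) ^ ((1 : ℝ) / q) * (k : ℝ) ^ ((1 : ℝ) / q) * x k)
      atTop ≤ 1 := by
  have hq0 : q ≠ 0 := by omega
  have hqR : (0:ℝ) < q := by exact_mod_cast Nat.pos_of_ne_zero hq0
  apply le_of_forall_pos_le_add
  intro ε hε
  obtain ⟨L, hLdef⟩ : ∃ L : ℝ, L = 1 + ε := ⟨_, rfl⟩
  have hL1 : 1 < L := by rw [hLdef]; linarith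
  have hL0 : 0 < L := by linarith
  have hLq1 : 1 < L ^ q := one_lt_pow₀ hL1 hq0
  have hLq0 : 0 < L ^ q := by linarith
  -- constants
  obtain ⟨B', hB'def⟩ : ∃ B' : ℝ, B' = q * C / L ^ q := ⟨_, rfl⟩
  have hB'0 : 0 < B' := by rw [hB'def]; positivity
  obtain ⟨D, hDdef⟩ : ∃ D : ℝ, D = (C / L ^ q + C) / 2 := ⟨_, rfl⟩
  have hD0 : 0 < D := by rw [hDdef]; positivity
  have hCLq : C / L ^ q < C := by
    rw [div_lt_iff₀ hLq0]; nlinarith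
  have hDC : D < C := by rw [hDdef]; linarith
  have hB'D : B' < q * D := by
    have h1 : C / L ^ q < D := by rw [hDdef]; linarith
    calc B' = q * (C / L ^ q) := by rw [hB'def]; ring
      _ < q * D := (mul_lt_mul_iff_right₀ hqR).mpr h1
  -- eventual smallness facts
  have hxh : Tendsto (fun k => x k * |h (x k)|) atTop (𝓝 0) := by
    have h1 : Tendsto (fun k => |h (x k)|) atTop (𝓝 |h 0|) :=
      ((continuous_abs.continuousAt).comp hh.continuousAt).tendsto.comp hlim
    have := hlim.mul h1
    simpa using this
  have hev1 : ∀ᶠ k in atTop, x k * |h (x k)| ≤ C - D :=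
    hxh.eventually_le_const (by linarith)
  have hxq : Tendsto (fun k => D * x k ^ q) atTop (𝓝 0) := by
    have := (hlim.pow q).const_mul D
    simpa [zero_pow hq0] using this
  have hev2 : ∀ᶠ k in atTop, D * x k ^ q ≤ 1/2 :=
    hxq.eventually_le_const (by norm_num)
  have hev3 : ∀ᶠ k in atTop, ktil ≤ k := eventually_ge_atTop ktil
  obtain ⟨N, hN⟩ := eventually_atTop.mp ((hev1.and hev2).and hev3)
  -- step inequality: y_{k+1} ≥ y_k + q D for k ≥ N, where y k = (x k)⁻¹ ^ q
  have hstep : ∀ k, N ≤ k → (x k)⁻¹ ^ q + q * D ≤ (x (k+1))⁻¹ ^ q := by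
    intro k hk
    obtain ⟨⟨hk1, hk2⟩, hk3⟩ := hN k hk
    obtain ⟨t, htdef⟩ : ∃ t : ℝ, t = D * x k ^ q := ⟨_, rfl⟩
    rw [← htdef] at hk2
    have hxk := hpos k
    have ht0 : 0 < t := by rw [htdef]; positivity
    have h1t : 0 < 1 - t := by linarith
    have hrec1 : x (k+1) ≤ x k * (1 - t) := by
      refine (hrec k hk3).trans ?_
      apply mul_le_mul_of_nonneg_left _ hxk.le
      have hb : x k ^ (q+1) * h (x k) ≤ (C - D) * x k ^ q := by
        calc x k ^ (q+1) * h (x k) ≤ x k ^ (q+1) * |h (x k)| := by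
              apply mul_le_mul_of_nonneg_left (le_abs_self _) (by positivity)
          _ = x k ^ q * (x k * |h (x k)|) := by ring
          _ ≤ x k ^ q * (C - D) := by
              apply mul_le_mul_of_nonneg_left hk1 (by positivity)
          _ = (C - D) * x k ^ q := by ring
      rw [htdef]; nlinarith
    -- pass to inverses
    have hx1 := hpos (k+1)
    have hinv : (x k * (1 - t))⁻¹ ≤ (x (k+1))⁻¹ := inv_anti₀ hx1 hrec1
    have hinvq : ((x k)⁻¹ * (1 - t)⁻¹) ^ q ≤ (x (k+1))⁻¹ ^ q := by
      rw [← mul_inv]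
      exact pow_le_pow_left₀ (by positivity) hinv q
    refine le_trans ?_ hinvq
    rw [mul_pow]
    -- (1-t)⁻¹ ^ q ≥ 1 + q t
    have hp : (0:ℝ) < (1-t)^q := pow_pos h1t q
    have hmul : (1 + q * t) * (1 - t) ^ q ≤ 1 := by
      have bern : 1 + (q:ℝ) * t ≤ (1 + t) ^ q := by
        have := one_add_mul_le_pow (a := t) (by linarith) q
        linarith
      calc (1 + (q:ℝ) * t) * (1 - t) ^ q ≤ (1+t)^q * (1-t)^q :=
            mul_le_mul_of_nonneg_right bern (pow_nonneg h1t.le q)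
        _ = (1 - t^2)^q := by rw [← mul_pow]; ring_nf
        _ ≤ 1 := pow_le_one₀ (by nlinarith) (by nlinarith)
    have key : 1 + q * t ≤ (1 - t)⁻¹ ^ q := by
      rw [inv_pow]
      calc 1 + (q:ℝ) * t = (1 + q*t) * (1-t)^q * ((1-t)^q)⁻¹ := by field_simp
        _ ≤ 1 * ((1-t)^q)⁻¹ := mul_le_mul_of_nonneg_right hmul (by positivity)
        _ = ((1-t)^q)⁻¹ := one_mul _
    have hyk : (0:ℝ) < (x k)⁻¹ ^ q := by positivity
    have hchain : (x k)⁻¹ ^ q * (1 + q * t) ≤ (x k)⁻¹ ^ q * (1 - t)⁻¹ ^ q :=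
      mul_le_mul_of_nonneg_left key hyk.le
    refine le_trans ?_ hchain
    have hyt : (x k)⁻¹ ^ q * t = D := by
      rw [htdef, show (x k)⁻¹ ^ q * (D * x k ^ q) = D * ((x k)⁻¹ ^ q * x k ^ q) by ring,
        ← mul_pow, inv_mul_cancel₀ hxk.ne', one_pow, mul_one]
    have heq : (x k)⁻¹ ^ q * (1 + q * t) = (x k)⁻¹ ^ q + q * D := by
      rw [mul_add, mul_one, show (x k)⁻¹ ^ q * ((q:ℝ) * t) = q * ((x k)⁻¹ ^ q * t) by ring, hyt]
    exact le_of_eq heq.symm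
  -- linear growth
  have hgrow : ∀ m : ℕ, (q:ℝ) * D * m ≤ (x (N + m))⁻¹ ^ q := by
    intro m
    induction m with
    | zero =>
      have hx := hpos N
      simp
      positivity
    | succ m ih =>
      have hs := hstep (N + m) (Nat.le_add_right N m)
      have he : N + (m+1) = (N + m) + 1 := by omega
      rw [he]
      push_cast
      linarith
  have hgrow' : ∀ k, N ≤ k → (q:ℝ) * D * ((k:ℝ) - N) ≤ (x k)⁻¹ ^ q := by
    intro k hk
    obtain ⟨m, rfl⟩ := Nat.exists_eq_add_of_le hk
    have := hgrow m
    push_cast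
    convert this using 2
    ring
  -- eventually y k ≥ B' k
  have hevB : ∀ᶠ k : ℕ in atTop, B' * k ≤ (x k)⁻¹ ^ q := by
    have hd : 0 < q * D - B' := by linarith
    obtain ⟨M, hM⟩ := exists_nat_gt ((q * D * N) / (q * D - B'))
    filter_upwards [eventually_ge_atTop (max N M)] with k hk
    have hkN : N ≤ k := le_trans (le_max_left _ _) hk
    have hkM : (M:ℝ) ≤ k := by exact_mod_cast le_trans (le_max_right _ _) hk
    have h1 := hgrow' k hkN
    have h2 : (q * D * N) / (q * D - B') ≤ (k:ℝ) := le_trans hM.le hkM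
    rw [div_le_iff₀ hd] at h2
    linarith
  -- conclude eventually f k ≤ L
  have hevf : ∀ᶠ k : ℕ in atTop,
      ((q : ℝ) * C) ^ ((1 : ℝ) / q) * (k : ℝ) ^ ((1 : ℝ) / q) * x k ≤ L := by
    filter_upwards [hevB, eventually_ge_atTop 1] with k hyk hk1
    have hkR : (0:ℝ) < k := by exact_mod_cast hk1
    have hxk := hpos k
    have hfnn : 0 ≤ ((q : ℝ) * C) ^ ((1 : ℝ) / q) * (k : ℝ) ^ ((1 : ℝ) / q) * x k := by
      positivity
    rw [← pow_le_pow_iff_left₀ hfnn hL0.le hq0]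
    have e1 : (((q : ℝ) * C) ^ ((1 : ℝ) / q)) ^ q = q * C := by
      rw [one_div, Real.rpow_inv_natCast_pow (by positivity) hq0]
    have e2 : (((k:ℝ)) ^ ((1 : ℝ) / q)) ^ q = k := by
      rw [one_div, Real.rpow_inv_natCast_pow hkR.le hq0]
    have hxq' : x k ^ q ≤ (B' * k)⁻¹ := by
      have h1 : B' * k ≤ (x k ^ q)⁻¹ := by rw [← inv_pow]; exact hyk
      calc x k ^ q = ((x k ^ q)⁻¹)⁻¹ := (inv_inv _).symm
        _ ≤ (B' * k)⁻¹ := inv_anti₀ (by positivity) h1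
    calc (((q : ℝ) * C) ^ ((1 : ℝ) / q) * (k : ℝ) ^ ((1 : ℝ) / q) * x k) ^ q
        = ((q:ℝ) * C) * k * x k ^ q := by rw [mul_pow, mul_pow, e1, e2]
      _ ≤ ((q:ℝ) * C) * k * (B' * k)⁻¹ := by
          apply mul_le_mul_of_nonneg_left hxq' (by positivity)
      _ = L ^ q := by
          rw [hB'def]
          field_simp
  rw [hLdef] at hevf
  refine limsup_le_of_le ?_ hevf
  apply isCoboundedUnder_le_of_eventually_le atTop (x := 0)
  filter_upwards with k
  exact mul_nonneg (mul_nonneg (Real.rpow_nonneg (by positivity) _)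
    (Real.rpow_nonneg (Nat.cast_nonneg k) _)) (hpos k).le
end

section
/- Let {x_k} ⊂ ℝ be a sequence converging to x_∞, let q be a positive integer, and let f : ℝ² → ℝ be continuous at (x_∞, 0). Let {w_k} ⊂ ℝ be defined by w_{k+1} = w_k (1 − w_k^q f(x_k, w_k)) for all k = 0, 1, …, and assume w_k > 0 for all k and w_k → 0 as k → ∞. Then lim_{k→∞} 1/(k w_k^q) = q f(x_∞, 0). In particular, if f(x_∞, 0) ≠ 0, then there exist constants c₁, c₂ > 0 and N ∈ ℕ such that c₁ k^{−1/q} ≤ w_k ≤ c₂ k^{−1/q} for all k ≥ N. -/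
/-!
Put `u_k = w_k^{-q}`. Since `w_{k+1} = w_k r_k` with `r_k = 1 - w_k^q f(x_k, w_k)`, the geometric
sum `1 - r^q = (1 - r)(1 + r + ⋯ + r^{q-1})` gives
`u_{k+1} - u_k = f(x_k, w_k) (1 + r_k + ⋯ + r_k^{q-1}) / r_k^q`, which tends to `q f(x_∞, 0)`
because `r_k → 1`. By Stolz–Cesàro, `u_k / k = 1 / (k w_k^q)` has the same limit `T`. If `T ≠ 0`
it is positive (the terms are), and `w_k / k^{-1/q} = (1 / (k w_k^q))^{-1/q} → T^{-1/q} > 0`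
gives the bounds.
-/

open Filter Topology Finset

theorem inv_pow_mul_one_sub_sub_inv_pow {K : Type*} [Field K] (q : ℕ) {w c : K} (hw : w ≠ 0)
    (h : 1 - w ^ q * c ≠ 0) :
    ((w * (1 - w ^ q * c)) ^ q)⁻¹ - (w ^ q)⁻¹
      = c * (∑ i ∈ range q, (1 - w ^ q * c) ^ i) / (1 - w ^ q * c) ^ q := by
  generalize hr : 1 - w ^ q * c = r at h ⊢
  have hgeom : 1 - r ^ q = w ^ q * (c * ∑ i ∈ range q, r ^ i) := by
    linear_combination geom_sum_mul r q + (∑ i ∈ range q, r ^ i) * hr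
  calc ((w * r) ^ q)⁻¹ - (w ^ q)⁻¹ = (1 - r ^ q) / (w ^ q * r ^ q) := by
        rw [mul_pow]; field_simp
    _ = c * (∑ i ∈ range q, r ^ i) / r ^ q := by
        rw [hgeom, mul_div_mul_left _ _ (pow_ne_zero q hw)]

theorem tendsto_mul_geom_sum_div_pow {α : Type*} {l : Filter α} {c e : α → ℝ} {L : ℝ} (q : ℕ)
    (hc : Tendsto c l (𝓝 L)) (he : Tendsto e l (𝓝 0)) :
    Tendsto (fun a => c a * (∑ i ∈ range q, (1 - e a) ^ i) / (1 - e a) ^ q) l (𝓝 (q * L)) := by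
  have hsub : Tendsto (fun a => 1 - e a) l (𝓝 1) := by simpa using he.const_sub 1
  have hsum : Tendsto (fun a => ∑ i ∈ range q, (1 - e a) ^ i) l (𝓝 (q : ℝ)) := by
    simpa using tendsto_finsetSum (range q) fun i _ => hsub.pow i
  have := (hc.mul hsum).div (hsub.pow q) (by simp)
  rwa [one_pow, div_one, mul_comm] at this

theorem tendsto_div_natCast_of_tendsto_sub {u : ℕ → ℝ} {l : ℝ}
    (h : Tendsto (fun k => u (k + 1) - u k) atTop (𝓝 l)) :
    Tendsto (fun k : ℕ => u k / k) atTop (𝓝 l) := by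
  have hinit : Tendsto (fun k : ℕ => (k : ℝ)⁻¹ * u 0) atTop (𝓝 0) := by
    simpa using tendsto_inv_atTop_nhds_zero_nat.mul_const (u 0)
  refine (add_zero l ▸ h.cesaro.add hinit).congr fun k => ?_
  rw [sum_range_sub u k]
  ring

theorem tendsto_one_div_natCast_mul_pow_of_recurrence {q : ℕ} (hq : q ≠ 0) {c w : ℕ → ℝ}
    {L : ℝ} (hc : Tendsto c atTop (𝓝 L)) (hrec : ∀ k, w (k + 1) = w k * (1 - w k ^ q * c k))
    (hpos : ∀ k, 0 < w k) (hw : Tendsto w atTop (𝓝 0)) :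
    Tendsto (fun k : ℕ => 1 / ((k : ℝ) * w k ^ q)) atTop (𝓝 (q * L)) := by
  have hfactor : ∀ k, 0 < 1 - w k ^ q * c k := fun k =>
    pos_of_mul_pos_right (hrec k ▸ hpos (k + 1)) (hpos k).le
  have hstep : ∀ k, (w (k + 1) ^ q)⁻¹ - (w k ^ q)⁻¹
      = c k * (∑ i ∈ range q, (1 - w k ^ q * c k) ^ i) / (1 - w k ^ q * c k) ^ q := fun k => by
    rw [hrec k]
    exact inv_pow_mul_one_sub_sub_inv_pow q (hpos k).ne' (hfactor k).ne'
  have hsmall : Tendsto (fun k => w k ^ q * c k) atTop (𝓝 0) := by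
    simpa [zero_pow hq] using (hw.pow q).mul hc
  have hdiff : Tendsto (fun k => (w (k + 1) ^ q)⁻¹ - (w k ^ q)⁻¹) atTop (𝓝 (q * L)) := by
    simpa only [hstep] using tendsto_mul_geom_sum_div_pow q hc hsmall
  refine (tendsto_div_natCast_of_tendsto_sub (u := fun k => (w k ^ q)⁻¹) hdiff).congr fun k => ?_
  rw [one_div, mul_inv, div_eq_mul_inv, mul_comm]

theorem tendsto_div_rpow_of_tendsto_one_div_natCast_mul_pow {q : ℕ} (hq : q ≠ 0) {w : ℕ → ℝ}
    {T : ℝ} (hT : T ≠ 0) (hpos : ∀ k, 0 < w k)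
    (h : Tendsto (fun k : ℕ => 1 / ((k : ℝ) * w k ^ q)) atTop (𝓝 T)) :
    Tendsto (fun k : ℕ => w k / (k : ℝ) ^ (-(1 : ℝ) / q)) atTop (𝓝 (T ^ (-(1 : ℝ) / q))) := by
  refine (h.rpow_const (Or.inl hT)).congr fun k => ?_
  have hk : (0 : ℝ) ≤ k := Nat.cast_nonneg k
  have hwk := hpos k
  rw [one_div, Real.inv_rpow (by positivity), ← Real.rpow_neg (by positivity), neg_div, neg_neg,
    Real.rpow_neg hk, div_inv_eq_mul, one_div, Real.mul_rpow hk (by positivity),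
    Real.pow_rpow_inv_natCast hwk.le hq, mul_comm]

theorem exists_rpow_bounds_of_tendsto_div_rpow {w : ℕ → ℝ} {p a : ℝ} (ha : 0 < a)
    (h : Tendsto (fun k : ℕ => w k / (k : ℝ) ^ p) atTop (𝓝 a)) :
    ∃ c₁ c₂ : ℝ, 0 < c₁ ∧ 0 < c₂ ∧ ∃ N : ℕ, ∀ k, N ≤ k →
      c₁ * (k : ℝ) ^ p ≤ w k ∧ w k ≤ c₂ * (k : ℝ) ^ p := by
  obtain ⟨N, hN⟩ := eventually_atTop.mp <|
    (h.eventually (Ioo_mem_nhds (half_lt_self ha) (lt_two_mul_self ha))).and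
      (eventually_gt_atTop 0)
  refine ⟨a / 2, 2 * a, by positivity, by positivity, N, fun k hk => ?_⟩
  obtain ⟨⟨hlow, hhigh⟩, hk0⟩ := hN k hk
  have hkp : (0 : ℝ) < (k : ℝ) ^ p := Real.rpow_pos_of_pos (Nat.cast_pos.mpr hk0) p
  rw [← div_mul_cancel₀ (w k) hkp.ne']
  exact ⟨by gcongr, by gcongr⟩

/-- (L4) Let `x_k → x_∞`, `q ≥ 1`, `f : ℝ² → ℝ` continuous at `(x_∞, 0)`, and let
`w_{k+1} = w_k (1 − w_k^q f(x_k, w_k))` with `w_k > 0` and `w_k → 0`. Then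
`lim 1/(k w_k^q) = q f(x_∞, 0)`; in particular, if `f(x_∞, 0) ≠ 0`, then
`w_k = Θ(k^{−1/q})`. -/
theorem stmt9 (x : ℕ → ℝ) (xinf : ℝ) (hx : Tendsto x atTop (𝓝 xinf))
    (q : ℕ) (hq : 1 ≤ q) (f : ℝ × ℝ → ℝ) (hf : ContinuousAt f (xinf, 0))
    (w : ℕ → ℝ) (hrec : ∀ k, w (k + 1) = w k * (1 - w k ^ q * f (x k, w k)))
    (hpos : ∀ k, 0 < w k) (hw : Tendsto w atTop (𝓝 0)) :
    Tendsto (fun k : ℕ => 1 / ((k : ℝ) * w k ^ q)) atTop (𝓝 ((q : ℝ) * f (xinf, 0)))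
    ∧ (f (xinf, 0) ≠ 0 →
        ∃ c₁ c₂ : ℝ, 0 < c₁ ∧ 0 < c₂ ∧ ∃ N : ℕ, ∀ k, N ≤ k →
          c₁ * (k : ℝ) ^ (-(1 : ℝ) / q) ≤ w k ∧ w k ≤ c₂ * (k : ℝ) ^ (-(1 : ℝ) / q)) := by
  have hq0 : q ≠ 0 := Nat.one_le_iff_ne_zero.mp hq
  have hfk : Tendsto (fun k => f (x k, w k)) atTop (𝓝 (f (xinf, 0))) :=
    hf.tendsto.comp (hx.prodMk_nhds hw)
  have hlim := tendsto_one_div_natCast_mul_pow_of_recurrence hq0 hfk hrec hpos hw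
  refine ⟨hlim, fun hL => ?_⟩
  have hT0 : (q : ℝ) * f (xinf, 0) ≠ 0 := mul_ne_zero (Nat.cast_ne_zero.mpr hq0) hL
  have hT : 0 < (q : ℝ) * f (xinf, 0) :=
    (ge_of_tendsto' hlim fun k => have := hpos k; by positivity).lt_of_ne' hT0
  exact exists_rpow_bounds_of_tendsto_div_rpow (Real.rpow_pos_of_pos hT _)
    (tendsto_div_rpow_of_tendsto_one_div_natCast_mul_pow hq0 hT0 hpos hlim)
end

section
/- Let {a_k} ⊂ ℝ be a sequence converging to a_∞, and let {x_k} ⊂ ℝ be a sequence converging to x_∞ satisfying x_{k+1} − x_k = a_k / k² for all k ≥ 1. Then lim_{k→∞} k (x_∞ − x_k) = a_∞. In particular, if a_∞ ≠ 0, then there exist constants c₁, c₂ > 0 and N ∈ ℕ such that c₁ k^{−1} ≤ |x_∞ − x_k| ≤ c₂ k^{−1} for all k ≥ N. -/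
/-!
Stolz–Cesàro in the `0/0` form: with `u k = x∞ - x k` and `v k = 1/k`, both tend to `0` and the
ratio of consecutive differences is `(a k / k²) / (1/k - 1/(k+1)) = a k (k+1)/k → a∞`, so
`u k / v k = k (x∞ - x k) → a∞`. The limit form of Stolz–Cesàro is obtained by summing the
per-step estimate `|Δu - L Δv| ≤ ε Δv` from `k` to `n` and letting `n → ∞`. The two-sided bound is
then read off from `|k (x∞ - x k)| ∈ (|a∞|/2, 2|a∞|)` for large `k`.
-/

open Filter Topology

namespace StolzCesaro

variable {u v : ℕ → ℝ} {L ε : ℝ}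

lemma abs_sub_sub_le_of_step {k : ℕ}
    (hstep : ∀ j, k ≤ j → |(u j - u (j + 1)) - L * (v j - v (j + 1))| ≤ ε * (v j - v (j + 1))) :
    ∀ n, k ≤ n → |(u k - u n) - L * (v k - v n)| ≤ ε * (v k - v n) := by
  intro n hn
  induction n, hn using Nat.le_induction with
  | base => simp
  | succ n hkn ih =>
    calc |(u k - u (n + 1)) - L * (v k - v (n + 1))|
        = |((u k - u n) - L * (v k - v n)) + ((u n - u (n + 1)) - L * (v n - v (n + 1)))| := by
          ring_nf
      _ ≤ ε * (v k - v n) + ε * (v n - v (n + 1)) :=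
          (abs_add_le _ _).trans (add_le_add ih (hstep n hkn))
      _ = ε * (v k - v (n + 1)) := by ring

lemma abs_sub_mul_le_of_step (hu : Tendsto u atTop (𝓝 0)) (hv : Tendsto v atTop (𝓝 0)) {k : ℕ}
    (hstep : ∀ j, k ≤ j → |(u j - u (j + 1)) - L * (v j - v (j + 1))| ≤ ε * (v j - v (j + 1))) :
    |u k - L * v k| ≤ ε * v k := by
  have hlim : Tendsto (fun n => |(u k - u n) - L * (v k - v n)| - ε * (v k - v n)) atTop
      (𝓝 (|u k - L * v k| - ε * v k)) := by
    simpa using (((tendsto_const_nhds.sub hu).sub (tendsto_const_nhds.mul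
      (tendsto_const_nhds.sub hv))).abs).sub (tendsto_const_nhds.mul (tendsto_const_nhds.sub hv))
  have := le_of_tendsto hlim (eventually_atTop.2 ⟨k, fun n hn =>
    sub_nonpos.2 (abs_sub_sub_le_of_step hstep n hn)⟩)
  linarith

theorem tendsto_div_of_tendsto_sub_div_sub (hu : Tendsto u atTop (𝓝 0))
    (hv : Tendsto v atTop (𝓝 0)) (hv_anti : ∀ᶠ k in atTop, v (k + 1) < v k)
    (h : Tendsto (fun k => (u k - u (k + 1)) / (v k - v (k + 1))) atTop (𝓝 L)) :
    Tendsto (fun k => u k / v k) atTop (𝓝 L) := by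
  rw [Metric.tendsto_atTop]
  intro ε hε
  obtain ⟨N, hN⟩ := eventually_atTop.1
    (hv_anti.and ((Metric.tendsto_atTop.1 h) (ε / 2) (half_pos hε) |> eventually_atTop.2))
  have hstep : ∀ k, N ≤ k → ∀ j, k ≤ j →
      |(u j - u (j + 1)) - L * (v j - v (j + 1))| ≤ ε / 2 * (v j - v (j + 1)) := by
    intro k hk j hj
    obtain ⟨hdec, hratio⟩ := hN j (hk.trans hj)
    have hd : 0 < v j - v (j + 1) := sub_pos.2 hdec
    rw [Real.dist_eq] at hratio
    calc |(u j - u (j + 1)) - L * (v j - v (j + 1))|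
        = |(u j - u (j + 1)) / (v j - v (j + 1)) - L| * (v j - v (j + 1)) := by
          rw [← abs_of_pos hd, ← abs_mul, abs_of_pos hd, sub_mul, div_mul_cancel₀ _ hd.ne']
      _ ≤ ε / 2 * (v j - v (j + 1)) := by gcongr
  refine ⟨N, fun k hk => ?_⟩
  have hbound := abs_sub_mul_le_of_step hu hv (hstep k hk)
  -- the bound at `k + 1` forces `0 ≤ v (k + 1)`
  have hvk : 0 < v k := by
    have := abs_sub_mul_le_of_step hu hv (hstep (k + 1) (hk.trans k.le_succ))
    nlinarith [abs_nonneg (u (k + 1) - L * v (k + 1)), (hN k hk).1]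
  rw [Real.dist_eq, div_sub' hvk.ne', abs_div, abs_of_pos hvk, div_lt_iff₀ hvk, mul_comm (v k) L]
  linarith [mul_lt_mul_of_pos_right (half_lt_self hε) hvk]

end StolzCesaro

lemma Filter.Tendsto.eventually_bounds_abs_of_natCast_mul {y : ℕ → ℝ} {L : ℝ}
    (h : Tendsto (fun k : ℕ => (k : ℝ) * y k) atTop (𝓝 L)) (hL : L ≠ 0) :
    ∀ᶠ k : ℕ in atTop, |L| / 2 * (k : ℝ)⁻¹ ≤ |y k| ∧ |y k| ≤ 2 * |L| * (k : ℝ)⁻¹ := by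
  have hL' : 0 < |L| := abs_pos.2 hL
  filter_upwards [h.abs.eventually (lt_mem_nhds (half_lt_self hL')),
    h.abs.eventually (gt_mem_nhds (by linarith : |L| < 2 * |L|)), eventually_gt_atTop 0]
    with k hlow hupp hk
  have hk' : (0 : ℝ) < k := Nat.cast_pos.2 hk
  rw [abs_mul, Nat.abs_cast] at hlow hupp
  rw [← div_eq_mul_inv, ← div_eq_mul_inv, div_le_iff₀ hk', le_div_iff₀ hk']
  constructor <;> linarith

lemma tendsto_natCast_mul_sub_of_sub_eq_div_sq {a x : ℕ → ℝ} {ainf xinf : ℝ}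
    (ha : Tendsto a atTop (𝓝 ainf)) (hx : Tendsto x atTop (𝓝 xinf))
    (hrec : ∀ k, 1 ≤ k → x (k + 1) - x k = a k / (k : ℝ) ^ 2) :
    Tendsto (fun k : ℕ => (k : ℝ) * (xinf - x k)) atTop (𝓝 ainf) := by
  have hinv : Tendsto (fun k : ℕ => (k : ℝ)⁻¹) atTop (𝓝 0) :=
    tendsto_inv_atTop_zero.comp tendsto_natCast_atTop_atTop
  have hanti : ∀ᶠ k : ℕ in atTop, ((k + 1 : ℕ) : ℝ)⁻¹ < (k : ℝ)⁻¹ :=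
    eventually_gt_atTop 0 |>.mono fun k hk =>
      inv_strictAnti₀ (Nat.cast_pos.2 hk) (by exact_mod_cast k.lt_succ_self)
  have hratio : Tendsto (fun k : ℕ => ((xinf - x k) - (xinf - x (k + 1))) /
      ((k : ℝ)⁻¹ - ((k + 1 : ℕ) : ℝ)⁻¹)) atTop (𝓝 ainf) := by
    have hlim : Tendsto (fun k : ℕ => a k * (1 + (k : ℝ)⁻¹)) atTop (𝓝 ainf) := by
      simpa using ha.mul ((tendsto_const_nhds (x := (1 : ℝ))).add hinv)
    refine hlim.congr' (eventually_gt_atTop 0 |>.mono fun k hk => ?_)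
    have hk' : (0 : ℝ) < k := Nat.cast_pos.2 hk
    dsimp only
    rw [sub_sub_sub_cancel_left, hrec k hk]
    push_cast
    field_simp
    ring
  refine (StolzCesaro.tendsto_div_of_tendsto_sub_div_sub (by simpa using hx.const_sub xinf)
    hinv hanti hratio).congr fun k => ?_
  rw [div_inv_eq_mul, mul_comm]

/-- (L5) Let `a_k → a_∞` and let `x_k → x_∞` satisfy `x_{k+1} − x_k = a_k / k²` for all
`k ≥ 1`. Then `lim k (x_∞ − x_k) = a_∞`; in particular, if `a_∞ ≠ 0`, then
`|x_∞ − x_k| = Θ(k^{−1})`. -/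
theorem stmt10 (a : ℕ → ℝ) (ainf : ℝ) (ha : Tendsto a atTop (𝓝 ainf))
    (x : ℕ → ℝ) (xinf : ℝ) (hx : Tendsto x atTop (𝓝 xinf))
    (hrec : ∀ k, 1 ≤ k → x (k + 1) - x k = a k / (k : ℝ) ^ 2) :
    Tendsto (fun k : ℕ => (k : ℝ) * (xinf - x k)) atTop (𝓝 ainf)
    ∧ (ainf ≠ 0 →
        ∃ c₁ c₂ : ℝ, 0 < c₁ ∧ 0 < c₂ ∧ ∃ N : ℕ, ∀ k, N ≤ k →
          c₁ * ((k : ℝ))⁻¹ ≤ |xinf - x k| ∧ |xinf - x k| ≤ c₂ * ((k : ℝ))⁻¹) := by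
  have hlim := tendsto_natCast_mul_sub_of_sub_eq_div_sq ha hx hrec
  refine ⟨hlim, fun hainf => ?_⟩
  have hpos : 0 < |ainf| := abs_pos.2 hainf
  exact ⟨_, _, half_pos hpos, mul_pos two_pos hpos,
    eventually_atTop.1 (hlim.eventually_bounds_abs_of_natCast_mul hainf)⟩
end

section
/- Let q ≥ 1 and let {(x_k, y_k)} ⊂ ℝ × ℝ^q be defined by the recurrence x_{k+1} = (1/2)(x_k + (x_k² + ‖y_k‖²)/√(x_k² + 2‖y_k‖²)) and y_{k+1} = (1/2)(1 + x_k/√(x_k² + 2‖y_k‖²)) y_k for k = 0, 1, …, with initial point satisfying y₀ ≠ 0. Then: (i) x_{k+1} ≥ x_k for all k ≥ 0; (ii) ‖y_{k+1}‖ < ‖y_k‖ for all k ≥ 0; (iii) x_k > 0 for all k ≥ 1; (iv) y_k ≠ 0 for all k ≥ 0. -/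
lemma stmt15_key (a b : ℝ) (hb : 0 < b) :
    a ≤ (1/2) * (a + (a^2 + b^2) / Real.sqrt (a^2 + 2*b^2)) ∧
    0 < (1/2) * (a + (a^2 + b^2) / Real.sqrt (a^2 + 2*b^2)) ∧
    0 < (1/2) * (1 + a / Real.sqrt (a^2 + 2*b^2)) ∧
    (1/2) * (1 + a / Real.sqrt (a^2 + 2*b^2)) < 1 := by
  set s := Real.sqrt (a^2 + 2*b^2) with hs
  have hs0 : 0 < s := Real.sqrt_pos.mpr (by nlinarith)
  have hs2 : s^2 = a^2 + 2*b^2 := Real.sq_sqrt (by nlinarith)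
  have hlt : a < s := by nlinarith [sq_nonneg (s - a)]
  have hgt : -s < a := by nlinarith [sq_nonneg (s + a)]
  have h1 : a * s ≤ a^2 + b^2 := by nlinarith [sq_nonneg (s - a)]
  have h2 : a ≤ (a^2 + b^2) / s := (le_div_iff₀ hs0).mpr h1
  have h3 : -a * s < a^2 + b^2 := by nlinarith [mul_pos (by linarith : 0 < s + a) (by linarith : 0 < s + a)]
  have h4 : -a < (a^2 + b^2) / s := (lt_div_iff₀ hs0).mpr h3
  have h5 : a / s < 1 := (div_lt_one hs0).mpr hlt
  have h6 : -1 < a / s := by rw [neg_lt, ← neg_div]; exact (div_lt_one hs0).mpr (by linarith)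
  exact ⟨by linarith, by linarith, by linarith, by linarith⟩

/-- Case 3 recurrence (alternating projections when the intersection is the half-line
`C(d)`): monotonicity and sign properties of the sequence `(x_k, y_k)`. -/
theorem stmt15 (q : ℕ) (hq : 1 ≤ q)
    (x : ℕ → ℝ) (y : ℕ → EuclideanSpace ℝ (Fin q))
    (hrecx : ∀ k : ℕ, x (k + 1) =
      (1 / 2) * (x k + (x k ^ 2 + ‖y k‖ ^ 2) / Real.sqrt (x k ^ 2 + 2 * ‖y k‖ ^ 2)))
    (hrecy : ∀ k : ℕ, y (k + 1) =
      ((1 / 2) * (1 + x k / Real.sqrt (x k ^ 2 + 2 * ‖y k‖ ^ 2))) • y k)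
    (hy0 : y 0 ≠ 0) :
    (∀ k : ℕ, x k ≤ x (k + 1))
    ∧ (∀ k : ℕ, ‖y (k + 1)‖ < ‖y k‖)
    ∧ (∀ k : ℕ, 1 ≤ k → 0 < x k)
    ∧ (∀ k : ℕ, y k ≠ 0) := by
  have hy : ∀ k : ℕ, y k ≠ 0 := by
    intro k
    induction k with
    | zero => exact hy0
    | succ n ih =>
      rw [hrecy n]
      have hb : 0 < ‖y n‖ := norm_pos_iff.mpr ih
      obtain ⟨_, _, hc, _⟩ := stmt15_key (x n) ‖y n‖ hb
      exact smul_ne_zero (ne_of_gt hc) ih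
  refine ⟨?_, ?_, ?_, hy⟩
  · intro k
    have hb : 0 < ‖y k‖ := norm_pos_iff.mpr (hy k)
    obtain ⟨h, _, _, _⟩ := stmt15_key (x k) ‖y k‖ hb
    rw [hrecx k]; exact h
  · intro k
    have hb : 0 < ‖y k‖ := norm_pos_iff.mpr (hy k)
    obtain ⟨_, _, hc, hc1⟩ := stmt15_key (x k) ‖y k‖ hb
    rw [hrecy k, norm_smul, Real.norm_eq_abs, abs_of_pos hc]
    exact mul_lt_of_lt_one_left hb hc1
  · intro k hk
    obtain ⟨n, rfl⟩ : ∃ n, k = n + 1 := ⟨k - 1, by omega⟩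
    have hb : 0 < ‖y n‖ := norm_pos_iff.mpr (hy n)
    obtain ⟨_, h, _, _⟩ := stmt15_key (x n) ‖y n‖ hb
    rw [hrecx n]; exact h
end

section
/- Define P(X, Z) = √(X² + 4Z²) and let {(X_k, Z_k)} ⊂ ℝ² satisfy X₀ > 0, Z₀ > 0 and the recurrence X_{k+1} = (X_k + P(X_k, Z_k))² / (4 P(X_k, Z_k)) and Z_{k+1} = (Z_k/5)(4 + X_k / P(X_k, Z_k)) for all k. Assume X_k converges to some X_∞ ∈ ℝ and Z_k → 0 as k → ∞. Then X_∞ > 0, lim_{k→∞} 1/(k Z_k²) = 4/(5 X_∞²), and lim_{k→∞} k (X_∞ − X_k) = 25 X_∞ / 16. In particular Z_k = Θ(k^{−1/2}) and X_∞ − X_k = Θ(k^{−1}), i.e., each quantity is bounded above and below by positive constant multiples of the stated power of k for all large k. -/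
/-!
Since `X_{k+1} - X_k = (P - X_k)² / (4P) = 4 Z_k⁴ / (P (P + X_k)²)`, the sequence `X` increases,
so `X_∞ ≥ X₀ > 0` and `P(X_k, Z_k) → X_∞`. The increments of `1 / Z_k²` then tend to
`4 (9 + 1) / (X_∞ · 2X_∞ · 5²) = 4 / (5 X_∞²)`, and Cesàro gives the limit of `1 / (k Z_k²)`.
Feeding `k Z_k² → 5 X_∞² / 4` back into the increment of `X` gives
`k (k + 1) (X_{k+1} - X_k) → 25 X_∞ / 16`, and comparing the tail `X_∞ - X_k` with the telescoping
sum of `1/j - 1/(j+1)` yields `k (X_∞ - X_k) → 25 X_∞ / 16`.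
-/

open Filter Topology

noncomputable def PXZ (X Z : ℝ) : ℝ := Real.sqrt (X ^ 2 + 4 * Z ^ 2)

lemma tendsto_div_natCast_of_tendsto_sub_succ {u : ℕ → ℝ} {L : ℝ}
    (h : Tendsto (fun k => u (k + 1) - u k) atTop (𝓝 L)) :
    Tendsto (fun k : ℕ => u k / k) atTop (𝓝 L) := by
  have hmean : Tendsto (fun n : ℕ => (n : ℝ)⁻¹ * (u n - u 0)) atTop (𝓝 L) := by
    simpa only [Finset.sum_range_sub u] using h.cesaro
  have hinit : Tendsto (fun n : ℕ => (n : ℝ)⁻¹ * u 0) atTop (𝓝 0) := by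
    simpa using tendsto_inv_atTop_nhds_zero_nat.mul_const (u 0)
  simpa [div_eq_inv_mul, mul_sub] using hmean.add hinit

lemma abs_sub_le_sub_of_abs_sub_succ_le {v f : ℕ → ℝ} {N : ℕ}
    (h : ∀ j, N ≤ j → |v j - v (j + 1)| ≤ f j - f (j + 1))
    {k n : ℕ} (hk : N ≤ k) (hkn : k ≤ n) :
    |v k - v n| ≤ f k - f n := by
  induction n, hkn using Nat.le_induction with
  | base => simp
  | succ n hkn ih =>
    calc |v k - v (n + 1)| ≤ |v k - v n| + |v n - v (n + 1)| := abs_sub_le _ _ _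
      _ ≤ (f k - f n) + (f n - f (n + 1)) := add_le_add ih (h n (hk.trans hkn))
      _ = f k - f (n + 1) := by ring

lemma tendsto_natCast_mul_of_tendsto_mul_sub_succ {u : ℕ → ℝ} {c : ℝ}
    (hu : Tendsto u atTop (𝓝 0))
    (h : Tendsto (fun k : ℕ => (k : ℝ) * (k + 1) * (u k - u (k + 1))) atTop (𝓝 c)) :
    Tendsto (fun k : ℕ => (k : ℝ) * u k) atTop (𝓝 c) := by
  rw [Metric.tendsto_atTop]
  intro ε hε
  obtain ⟨N, hN⟩ := Metric.tendsto_atTop.mp h (ε / 2) (half_pos hε)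
  set v : ℕ → ℝ := fun k => u k - c / k with hv_def
  have hinc : ∀ j, N + 1 ≤ j →
      |v j - v (j + 1)| ≤ ε / 2 / j - ε / 2 / ((j + 1 : ℕ) : ℝ) := by
    intro j hj
    have hj0 : (0 : ℝ) < j := by exact_mod_cast (Nat.succ_le_iff.mp (le_of_add_le_right hj))
    have hsplit : v j - v (j + 1) = ((j : ℝ) * (j + 1) * (u j - u (j + 1)) - c) / (j * (j + 1)) := by
      simp only [hv_def]; push_cast; field_simp; ring
    have htelescope : ε / 2 / j - ε / 2 / ((j + 1 : ℕ) : ℝ) = ε / 2 / (j * (j + 1)) := by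
      push_cast; field_simp; ring
    have hclose := hN j (by omega)
    rw [Real.dist_eq] at hclose
    rw [hsplit, htelescope, abs_div, abs_of_pos (show (0 : ℝ) < j * (j + 1) by positivity)]
    exact div_le_div_of_nonneg_right hclose.le (by positivity)
  have hv : Tendsto v atTop (𝓝 0) := by
    simpa using hu.sub (tendsto_const_div_atTop_nhds_zero_nat c)
  refine ⟨N + 1, fun k hk => ?_⟩
  have hk0 : (0 : ℝ) < k := by exact_mod_cast (Nat.succ_le_iff.mp (le_of_add_le_right hk))
  -- sum the increment bounds from `k` to infinity
  have hvk : |v k| ≤ ε / 2 / k := by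
    have hlim : Tendsto (fun n => |v k - v n|) atTop (𝓝 |v k - 0|) :=
      (tendsto_const_nhds.sub hv).abs
    have hbound : Tendsto (fun n : ℕ => ε / 2 / k - ε / 2 / n) atTop (𝓝 (ε / 2 / k - 0)) :=
      tendsto_const_nhds.sub (tendsto_const_div_atTop_nhds_zero_nat _)
    simpa using le_of_tendsto_of_tendsto hlim hbound
      (eventually_atTop.2 ⟨k, fun n hn => abs_sub_le_sub_of_abs_sub_succ_le hinc hk hn⟩)
  have hku : (k : ℝ) * u k - c = k * v k := by simp only [hv_def]; field_simp
  rw [Real.dist_eq, hku, abs_mul, abs_of_pos hk0]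
  calc (k : ℝ) * |v k| ≤ k * (ε / 2 / k) := mul_le_mul_of_nonneg_left hvk hk0.le
    _ = ε / 2 := by field_simp
    _ < ε := half_lt_self hε

lemma exists_bounds_of_tendsto_mul {f g : ℕ → ℝ} {c : ℝ} (hc : 0 < c)
    (hg : ∀ᶠ k in atTop, 0 < g k) (h : Tendsto (fun k => g k * f k) atTop (𝓝 c)) :
    ∃ c₁ c₂ : ℝ, 0 < c₁ ∧ 0 < c₂ ∧ ∃ N : ℕ, ∀ k, N ≤ k →
      c₁ * (g k)⁻¹ ≤ f k ∧ f k ≤ c₂ * (g k)⁻¹ := by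
  have hbd : ∀ᶠ k in atTop, g k * f k ∈ Set.Ioo (c / 2) (2 * c) :=
    h (Ioo_mem_nhds (by linarith) (by linarith))
  obtain ⟨N, hN⟩ := eventually_atTop.mp (hg.and hbd)
  refine ⟨c / 2, 2 * c, by positivity, by positivity, N, fun k hk => ?_⟩
  obtain ⟨hgk, hlo, hhi⟩ := hN k hk
  constructor
  · rw [← div_eq_mul_inv, div_le_iff₀ hgk]; linarith
  · rw [← div_eq_mul_inv, le_div_iff₀ hgk]; linarith

lemma PXZ_pos {x : ℝ} (hx : 0 < x) (z : ℝ) : 0 < PXZ x z :=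
  Real.sqrt_pos.2 (by positivity)

lemma PXZ_sq (x z : ℝ) : PXZ x z ^ 2 = x ^ 2 + 4 * z ^ 2 :=
  Real.sq_sqrt (by positivity)

lemma sq_add_PXZ_div_sub {x : ℝ} (hx : 0 < x) (z : ℝ) :
    (x + PXZ x z) ^ 2 / (4 * PXZ x z) - x = 4 * z ^ 4 / (PXZ x z * (PXZ x z + x) ^ 2) := by
  have hP := PXZ_pos hx z
  field_simp
  linear_combination (PXZ x z ^ 2 - x ^ 2 + 4 * z ^ 2) * PXZ_sq x z

lemma inv_sq_mul_sub_inv_sq {x z : ℝ} (hx : 0 < x) (hz : z ≠ 0) :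
    ((z / 5 * (4 + x / PXZ x z)) ^ 2)⁻¹ - (z ^ 2)⁻¹
      = 4 * (9 + x / PXZ x z) / (PXZ x z * (PXZ x z + x) * (4 + x / PXZ x z) ^ 2) := by
  have hP := PXZ_pos hx z
  have h4 : 4 + x / PXZ x z ≠ 0 := by positivity
  field_simp
  linear_combination (9 * PXZ x z + x) * PXZ_sq x z

lemma tendsto_PXZ {α : Type*} {l : Filter α} {x z : α → ℝ} {a : ℝ} (ha : 0 ≤ a)
    (hx : Tendsto x l (𝓝 a)) (hz : Tendsto z l (𝓝 0)) :
    Tendsto (fun t => PXZ (x t) (z t)) l (𝓝 a) := by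
  have h := ((hx.pow 2).add ((hz.pow 2).const_mul 4)).sqrt
  simpa [PXZ, Real.sqrt_sq ha] using h

section Orbit

variable {X Z : ℕ → ℝ} {a : ℝ}

lemma orbit_pos (hX0 : 0 < X 0) (hZ0 : 0 < Z 0)
    (hrecX : ∀ k : ℕ, X (k + 1) = (X k + PXZ (X k) (Z k)) ^ 2 / (4 * PXZ (X k) (Z k)))
    (hrecZ : ∀ k : ℕ, Z (k + 1) = (Z k / 5) * (4 + X k / PXZ (X k) (Z k))) (k : ℕ) :
    0 < X k ∧ 0 < Z k := by
  induction k with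
  | zero => exact ⟨hX0, hZ0⟩
  | succ k ih =>
    obtain ⟨hXk, hZk⟩ := ih
    have hP := PXZ_pos hXk (Z k)
    constructor
    · rw [hrecX k]; positivity
    · rw [hrecZ k]; positivity

lemma tendsto_inv_sq_succ_sub_inv_sq (hX : ∀ k, 0 < X k) (hZ : ∀ k, 0 < Z k)
    (hrecZ : ∀ k : ℕ, Z (k + 1) = (Z k / 5) * (4 + X k / PXZ (X k) (Z k)))
    (ha : 0 < a) (hXlim : Tendsto X atTop (𝓝 a)) (hZlim : Tendsto Z atTop (𝓝 0)) :
    Tendsto (fun k => (Z (k + 1) ^ 2)⁻¹ - (Z k ^ 2)⁻¹) atTop (𝓝 (4 / (5 * a ^ 2))) := by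
  have hP := tendsto_PXZ ha.le hXlim hZlim
  have hratio : Tendsto (fun k => X k / PXZ (X k) (Z k)) atTop (𝓝 1) := by
    have h := hXlim.div hP ha.ne'
    rwa [div_self ha.ne'] at h
  have hlim := ((hratio.const_add 9).const_mul 4).div
    ((hP.mul (hP.add hXlim)).mul ((hratio.const_add 4).pow 2)) (by positivity)
  convert hlim using 2 with k
  · rw [Pi.div_apply, hrecZ k, inv_sq_mul_sub_inv_sq (hX k) (hZ k).ne']
  · field_simp; ring

lemma tendsto_mul_succ_mul_sub (hX : ∀ k, 0 < X k)
    (hrecX : ∀ k : ℕ, X (k + 1) = (X k + PXZ (X k) (Z k)) ^ 2 / (4 * PXZ (X k) (Z k)))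
    (ha : 0 < a) (hXlim : Tendsto X atTop (𝓝 a)) (hZlim : Tendsto Z atTop (𝓝 0))
    (hkZ : Tendsto (fun k : ℕ => (k : ℝ) * Z k ^ 2) atTop (𝓝 (5 * a ^ 2 / 4))) :
    Tendsto (fun k : ℕ => (k : ℝ) * (k + 1) * (X (k + 1) - X k)) atTop (𝓝 (25 * a / 16)) := by
  have hP := tendsto_PXZ ha.le hXlim hZlim
  have hk1Z : Tendsto (fun k : ℕ => ((k : ℝ) + 1) * Z k ^ 2) atTop (𝓝 (5 * a ^ 2 / 4)) := by
    simpa [add_mul] using hkZ.add (hZlim.pow 2)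
  have hlim := (hkZ.mul hk1Z).mul ((tendsto_const_nhds (x := (4 : ℝ))).div
    (hP.mul ((hP.add hXlim).pow 2)) (by positivity))
  convert hlim using 2 with k
  · rw [Pi.div_apply, hrecX k, sq_add_PXZ_div_sub (hX k)]; ring
  · field_simp; ring

end Orbit

/-- Example 2, case `Z₀ > 0`: for the recurrence
`X_{k+1} = (X_k + P(X_k,Z_k))²/(4P(X_k,Z_k))`, `Z_{k+1} = (Z_k/5)(4 + X_k/P(X_k,Z_k))`
with `X₀, Z₀ > 0`, `X_k → X_∞` and `Z_k → 0`, one has `X_∞ > 0`,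
`lim 1/(k Z_k²) = 4/(5X_∞²)` and `lim k(X_∞ − X_k) = 25X_∞/16`; in particular
`Z_k = Θ(k^{−1/2})` and `X_∞ − X_k = Θ(k^{−1})`. -/
theorem stmt19 (X Z : ℕ → ℝ) (hX0 : 0 < X 0) (hZ0 : 0 < Z 0)
    (hrecX : ∀ k : ℕ, X (k + 1) = (X k + PXZ (X k) (Z k)) ^ 2 / (4 * PXZ (X k) (Z k)))
    (hrecZ : ∀ k : ℕ, Z (k + 1) = (Z k / 5) * (4 + X k / PXZ (X k) (Z k)))
    (Xinf : ℝ) (hXlim : Tendsto X atTop (𝓝 Xinf))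
    (hZlim : Tendsto Z atTop (𝓝 0)) :
    0 < Xinf
    ∧ Tendsto (fun k : ℕ => 1 / ((k : ℝ) * Z k ^ 2)) atTop (𝓝 (4 / (5 * Xinf ^ 2)))
    ∧ Tendsto (fun k : ℕ => (k : ℝ) * (Xinf - X k)) atTop (𝓝 (25 * Xinf / 16))
    ∧ (∃ c₁ c₂ : ℝ, 0 < c₁ ∧ 0 < c₂ ∧ ∃ N : ℕ, ∀ k, N ≤ k →
        c₁ * (Real.sqrt k)⁻¹ ≤ Z k ∧ Z k ≤ c₂ * (Real.sqrt k)⁻¹)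
    ∧ (∃ c₁ c₂ : ℝ, 0 < c₁ ∧ 0 < c₂ ∧ ∃ N : ℕ, ∀ k, N ≤ k →
        c₁ * ((k : ℝ))⁻¹ ≤ Xinf - X k ∧ Xinf - X k ≤ c₂ * ((k : ℝ))⁻¹) := by
  have hX k := (orbit_pos hX0 hZ0 hrecX hrecZ k).1
  have hZ k := (orbit_pos hX0 hZ0 hrecX hrecZ k).2
  have hmono : Monotone X := monotone_nat_of_le_succ fun k => by
    have hP := PXZ_pos (hX k) (Z k)
    rw [← sub_nonneg, hrecX k, sq_add_PXZ_div_sub (hX k)]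
    positivity
  have hXinf : 0 < Xinf := hX0.trans_le (hmono.ge_of_tendsto hXlim 0)
  have hinvZ := tendsto_div_natCast_of_tendsto_sub_succ (u := fun k => (Z k ^ 2)⁻¹)
    (tendsto_inv_sq_succ_sub_inv_sq hX hZ hrecZ hXinf hXlim hZlim)
  have hkZ : Tendsto (fun k : ℕ => (k : ℝ) * Z k ^ 2) atTop (𝓝 (5 * Xinf ^ 2 / 4)) := by
    convert hinvZ.inv₀ (by positivity) using 2 with k
    · simp [div_eq_mul_inv, mul_comm]
    · field_simp
  have hXgap : Tendsto (fun k : ℕ => (k : ℝ) * (Xinf - X k)) atTop (𝓝 (25 * Xinf / 16)) :=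
    tendsto_natCast_mul_of_tendsto_mul_sub_succ (by simpa using hXlim.const_sub Xinf)
      (by simpa using tendsto_mul_succ_mul_sub hX hrecX hXinf hXlim hZlim hkZ)
  have hsqrtkZ : Tendsto (fun k : ℕ => Real.sqrt k * Z k) atTop
      (𝓝 (Real.sqrt (5 * Xinf ^ 2 / 4))) := by
    refine hkZ.sqrt.congr fun k => ?_
    rw [Real.sqrt_mul (Nat.cast_nonneg k), Real.sqrt_sq (hZ k).le]
  refine ⟨hXinf, by simpa [one_div, mul_comm, div_eq_mul_inv] using hinvZ, hXgap,
    exists_bounds_of_tendsto_mul (by positivity) ?_ hsqrtkZ,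
    exists_bounds_of_tendsto_mul (by positivity) ?_ hXgap⟩
  · exact (eventually_gt_atTop 0).mono fun k hk => Real.sqrt_pos.2 (Nat.cast_pos.2 hk)
  · exact (eventually_gt_atTop 0).mono fun k hk => Nat.cast_pos.2 hk
end
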